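/- arXiv:gr-qc/0609119 — 18 statements merged into one kernel-verified Lean document; each statement's English description precedes it below -/
import Mathlib

section
/- Let V be a finite-dimensional real vector space, let g be a nondegenerate symmetric bilinear form on V which is indefinite (there exist u, w ∈ V with g(u,u) < 0 and g(w,w) > 0), and let b be any symmetric bilinear form on V. Then there exists a constant c ∈ ℝ with b = c·g if and only if b(v,v) = 0 for every v ∈ V with g(v,v) = 0. -/
private lemma key_aux {V : Type*} [AddCommGroup V] [Module ℝ V]
    (g b : LinearMap.BilinForm ℝ V)
    (hg_symm : ∀ u v : V, g u v = g v u)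
    (hb_symm : ∀ u v : V, b u v = b v u)
    (h0 : ∀ v : V, g v v = 0 → b v v = 0)
    (u v : V) (huv : g u u * g v v < 0) :
    b v v * g u u = b u u * g v v := by
  have hA : g u u ≠ 0 := by
    intro h; rw [h] at huv; simp at huv
  set s : ℝ := Real.sqrt (g u v ^ 2 - g u u * g v v) with hs
  have hs2 : s ^ 2 = g u v ^ 2 - g u u * g v v := Real.sq_sqrt (by nlinarith)
  have hspos : 0 < s := Real.sqrt_pos.2 (by nlinarith)
  have expandg : ∀ t : ℝ, g (g u u • v + t • u) (g u u • v + t • u)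
      = g u u ^ 2 * g v v + 2 * g u u * t * g u v + t ^ 2 * g u u := by
    intro t
    simp only [map_add, map_smul, LinearMap.add_apply, LinearMap.smul_apply, smul_eq_mul]
    rw [hg_symm v u]
    ring
  have expandb : ∀ t : ℝ, b (g u u • v + t • u) (g u u • v + t • u)
      = g u u ^ 2 * b v v + 2 * g u u * t * b u v + t ^ 2 * b u u := by
    intro t
    simp only [map_add, map_smul, LinearMap.add_apply, LinearMap.smul_apply, smul_eq_mul]
    rw [hb_symm v u]
    ring
  have e1 : g u u ^ 2 * b v v + 2 * g u u * (s - g u v) * b u v + (s - g u v) ^ 2 * b u u = 0 := by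
    rw [← expandb]
    apply h0
    rw [expandg]
    linear_combination g u u * hs2
  have e2 : g u u ^ 2 * b v v + 2 * g u u * (-s - g u v) * b u v + (-s - g u v) ^ 2 * b u u = 0 := by
    rw [← expandb]
    apply h0
    rw [expandg]
    linear_combination g u u * hs2
  have h3 : 2 * g u u * s * (b v v * g u u - b u u * g v v) = 0 := by
    linear_combination (s + g u v) * e1 + (s - g u v) * e2 + (-2 * s * b u u) * hs2
  have h4 : b v v * g u u - b u u * g v v = 0 := by
    rcases mul_eq_zero.mp h3 with h | h
    · rcases mul_eq_zero.mp h with h' | h'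
      · exact absurd h' (by positivity)
      · exact absurd h' (ne_of_gt hspos)
    · exact h
  linarith

/-- Dajczer et al. criterion: a symmetric bilinear form `b` vanishing on the null
cone of a nondegenerate indefinite symmetric bilinear form `g` on a
finite-dimensional real vector space is proportional to `g`. -/
theorem stmt_0 {V : Type*} [AddCommGroup V] [Module ℝ V] [FiniteDimensional ℝ V]
    (g b : LinearMap.BilinForm ℝ V)
    (hg_symm : ∀ u v : V, g u v = g v u)
    (hb_symm : ∀ u v : V, b u v = b v u)
    (hg_nondeg : ∀ v : V, (∀ w : V, g v w = 0) → v = 0)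
    (hg_neg : ∃ u : V, g u u < 0)
    (hg_pos : ∃ w : V, g w w > 0) :
    (∃ c : ℝ, b = c • g) ↔ (∀ v : V, g v v = 0 → b v v = 0) := by
  constructor
  · rintro ⟨c, rfl⟩ v hv
    simp [hv]
  · intro h0
    obtain ⟨u, hu⟩ := hg_neg
    obtain ⟨w, hw⟩ := hg_pos
    have hune : g u u ≠ 0 := ne_of_lt hu
    have hwne : g w w ≠ 0 := ne_of_gt hw
    have hQ : ∀ x : V, b x x * g u u = b u u * g x x := by
      intro x
      rcases lt_trichotomy (g x x) 0 with h | h | h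
      · have k1 := key_aux g b hg_symm hb_symm h0 x w (by nlinarith)
        have k2 := key_aux g b hg_symm hb_symm h0 u w (by nlinarith)
        have key : (b x x * g u u) * g w w = (b u u * g x x) * g w w := by
          linear_combination g x x * k2 - g u u * k1
        exact mul_right_cancel₀ hwne key
      · rw [h, h0 x h]; ring
      · exact key_aux g b hg_symm hb_symm h0 u x (by nlinarith)
    refine ⟨b u u / g u u, ?_⟩
    ext v w'
    have h1 := hQ (v + w')
    have h2 := hQ v
    have h3 := hQ w'
    simp only [map_add, LinearMap.add_apply] at h1
    rw [hb_symm w' v, hg_symm w' v] at h1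
    have hbw : b v w' * g u u = b u u * g v w' := by linarith
    simp only [LinearMap.smul_apply, smul_eq_mul]
    field_simp
    linarith
end

section
/- Let V be a finite-dimensional real vector space, let g be a nondegenerate symmetric bilinear form on V which is indefinite (there exist u, w ∈ V with g(u,u) < 0 and g(w,w) > 0), and let b be any symmetric bilinear form on V. Then there exists a constant c ∈ ℝ with b = c·g if and only if there exists a > 0 such that b(v,v)/g(v,v) ≤ a for every v ∈ V with g(v,v) ≠ 0. -/
private lemma aux_pos (a d B C D E : ℝ) (ha : 0 < a) (hd : 0 < d)
    (h : ∀ t : ℝ, 0 < 2*t*d + t^2*E → B + 2*t*C + t^2*D ≤ a * (2*t*d + t^2*E)) :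
    B ≤ 0 := by
  by_contra hB
  push_neg at hB
  set t : ℝ := min 1 (min (d/(|E|+1)) (B/(2*|C|+|D|+3*a*d+1))) with ht
  have hE : (0:ℝ) < |E|+1 := by positivity
  have hden : (0:ℝ) < 2*|C|+|D|+3*a*d+1 := by positivity
  have ht0 : 0 < t := by
    apply lt_min (by norm_num) (lt_min (by positivity) (by positivity))
  have ht1 : t ≤ 1 := min_le_left _ _
  have ht2 : t ≤ d/(|E|+1) := le_trans (min_le_right _ _) (min_le_left _ _)
  have ht3 : t ≤ B/(2*|C|+|D|+3*a*d+1) := le_trans (min_le_right _ _) (min_le_right _ _)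
  have htE : t * |E| < d := by
    have := (le_div_iff₀ hE).mp ht2
    nlinarith [abs_nonneg E]
  have ht1' : t^2 ≤ t := by nlinarith
  have hEt1 : -d < t * E := by nlinarith [neg_abs_le E, abs_nonneg E]
  have hEt2 : t^2 * E ≤ t * d := by nlinarith [le_abs_self E, sq_nonneg t, abs_nonneg E]
  have hgpos : 0 < 2*t*d + t^2*E := by nlinarith [sq_nonneg t]
  have hb := h t hgpos
  have htB : t * (2*|C|+|D|+3*a*d+1) ≤ B :=
    calc t * (2*|C|+|D|+3*a*d+1) ≤ (B/(2*|C|+|D|+3*a*d+1)) * (2*|C|+|D|+3*a*d+1) :=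
          mul_le_mul_of_nonneg_right ht3 (le_of_lt hden)
      _ = B := by field_simp
  have h1 : t*(-|C|) ≤ t*C := mul_le_mul_of_nonneg_left (neg_abs_le C) ht0.le
  have h2 : t^2*(-|D|) ≤ t^2*D := mul_le_mul_of_nonneg_left (neg_abs_le D) (sq_nonneg t)
  have h3 : t*(-|D|) ≤ t^2*(-|D|) := by nlinarith [abs_nonneg D]
  nlinarith [mul_le_mul_of_nonneg_left hEt2 ha.le]

private lemma expand_bil {V : Type*} [AddCommGroup V] [Module ℝ V]
    (B : LinearMap.BilinForm ℝ V) (hs : ∀ u v : V, B u v = B v u) (v w : V) (t : ℝ) :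
    B (v + t • w) (v + t • w) = B v v + 2*t*(B v w) + t^2*(B w w) := by
  simp [map_add, map_smul, LinearMap.add_apply, LinearMap.smul_apply, smul_eq_mul, hs w v]
  ring

/-- Bound-type criterion: `b = c • g` iff `b(v,v)/g(v,v)` is bounded above on
non-null vectors, for `g` a nondegenerate indefinite symmetric bilinear form on
a finite-dimensional real vector space. -/
theorem stmt_1 {V : Type*} [AddCommGroup V] [Module ℝ V] [FiniteDimensional ℝ V]
    (g b : LinearMap.BilinForm ℝ V)
    (hg_symm : ∀ u v : V, g u v = g v u)
    (hb_symm : ∀ u v : V, b u v = b v u)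
    (hg_nondeg : ∀ v : V, (∀ w : V, g v w = 0) → v = 0)
    (hg_neg : ∃ u : V, g u u < 0)
    (hg_pos : ∃ w : V, g w w > 0) :
    (∃ c : ℝ, b = c • g) ↔
      (∃ a : ℝ, 0 < a ∧ ∀ v : V, g v v ≠ 0 → b v v / g v v ≤ a) := by
  constructor
  · rintro ⟨c, rfl⟩
    refine ⟨|c| + 1, by positivity, fun v hv => ?_⟩
    have : (c • g) v v = c * g v v := rfl
    rw [this, mul_div_assoc, div_self hv, mul_one]
    calc c ≤ |c| := le_abs_self c
      _ ≤ |c| + 1 := by linarith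
  · rintro ⟨a, ha, hbound⟩
    -- Step 1: b vanishes on the null cone of g.
    have hnull : ∀ v : V, g v v = 0 → b v v = 0 := by
      intro v hv
      rcases eq_or_ne v 0 with rfl | hv0
      · simp
      · obtain ⟨w0, hw0⟩ : ∃ w : V, g v w ≠ 0 := by
          by_contra hc; push_neg at hc; exact hv0 (hg_nondeg v hc)
        -- choose w with g v w > 0
        obtain ⟨w, hw⟩ : ∃ w : V, 0 < g v w := by
          rcases hw0.lt_or_gt with h | h
          · exact ⟨-w0, by simpa using h⟩
          · exact ⟨w0, h⟩
        -- ratio bound restated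
        have hub : ∀ u : V, 0 < g u u → b u u ≤ a * g u u := by
          intro u hu
          have := hbound u hu.ne'
          rw [div_le_iff₀ hu] at this
          linarith [this]
        have hlb : ∀ u : V, g u u < 0 → a * g u u ≤ b u u := by
          intro u hu
          have := hbound u hu.ne
          rw [div_le_iff_of_neg hu] at this
          linarith [this]
        have key1 : b v v ≤ 0 := by
          apply aux_pos a (g v w) (b v v) (b v w) (b w w) (g w w) ha hw
          intro t htg
          have hgexp := expand_bil g hg_symm v w t
          have hbexp := expand_bil b hb_symm v w t
          rw [hv] at hgexp
          have hgu : 0 < g (v + t • w) (v + t • w) := by rw [hgexp]; linarith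
          have := hub _ hgu
          rw [hgexp, hbexp] at this
          linarith
        have key2 : 0 ≤ b v v := by
          have : -(b v v) ≤ 0 := by
            apply aux_pos a (g v w) (-(b v v)) (b v w) (-(b w w)) (-(g w w)) ha hw
            intro t htg
            have hgexp := expand_bil g hg_symm v w (-t)
            have hbexp := expand_bil b hb_symm v w (-t)
            rw [hv] at hgexp
            have hgu : g (v + (-t) • w) (v + (-t) • w) < 0 := by
              rw [hgexp]; nlinarith [htg]
            have := hlb _ hgu
            rw [hgexp, hbexp] at this
            nlinarith [this]
          linarith
        linarith
    -- Step 2 (orthogonal case): g x y = 0, g x x > 0, g y y < 0 ⇒ ratios agree and b x y = 0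
    have horth : ∀ x y : V, g x y = 0 → 0 < g x x → g y y < 0 →
        b x x * g y y = b y y * g x x ∧ b x y = 0 := by
      intro x y hxy hx hy
      have hq : 0 < g x x / (-(g y y)) := div_pos hx (by linarith)
      set t : ℝ := Real.sqrt (g x x / (-(g y y))) with htdef
      have ht2 : t^2 = g x x / (-(g y y)) := Real.sq_sqrt hq.le
      have ht0 : 0 < t := Real.sqrt_pos.mpr hq
      have hyne : g y y ≠ 0 := hy.ne
      have hkey : t^2 * g y y = -(g x x) := by
        rw [ht2, div_mul_eq_mul_div, div_eq_iff (neg_ne_zero.mpr hyne)]; ring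
      have hn1 : g (x + t • y) (x + t • y) = 0 := by
        rw [expand_bil g hg_symm, hxy]; linear_combination hkey
      have hn2 : g (x + (-t) • y) (x + (-t) • y) = 0 := by
        rw [expand_bil g hg_symm, hxy]; linear_combination hkey
      have hb1 := hnull _ hn1
      have hb2 := hnull _ hn2
      rw [expand_bil b hb_symm] at hb1 hb2
      have hb2' : b x x - 2*t*(b x y) + t^2*(b y y) = 0 := by linear_combination hb2
      have hbxy : b x y = 0 := by
        have h4 : t * (b x y) = 0 := by linarith
        exact (mul_eq_zero.mp h4).resolve_left ht0.ne'
      have hsum : b x x + t^2 * b y y = 0 := by linarith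
      exact ⟨by linear_combination (g y y) * hsum - (b y y) * hkey, hbxy⟩
    -- Step 2 (general): for g x x > 0, g y y < 0, ratios agree
    have hratio : ∀ x y : V, 0 < g x x → g y y < 0 → b x x * g y y = b y y * g x x := by
      intro x y hx hy
      set s : ℝ := g x y / g x x with hsdef
      set y' : V := y - s • x with hy'def
      have hxne : g x x ≠ 0 := hx.ne'
      have hgxy' : g x y' = 0 := by
        simp only [hy'def, map_sub, map_smul, LinearMap.sub_apply, LinearMap.smul_apply,
          smul_eq_mul, hsdef]
        field_simp
        ring
      have hgy'x : g y' x = 0 := by rw [hg_symm]; exact hgxy'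
      have hs : s * g x x = g x y := by
        rw [hsdef]; field_simp
      have hgy' : g y' y' = g y y - s^2 * g x x := by
        have hexp : g y' y' = g y y - 2*s*(g x y) + s^2 * g x x := by
          simp only [hy'def, map_sub, map_smul, LinearMap.sub_apply, LinearMap.smul_apply,
            smul_eq_mul, hg_symm y x]
          ring
        rw [hexp]; linear_combination 2*s*hs
      have hy'neg : g y' y' < 0 := by
        rw [hgy']; nlinarith [sq_nonneg s]
      obtain ⟨hrat, hbxy'⟩ := horth x y' hgxy' hx hy'neg
      have hby'x : b y' x = 0 := by rw [hb_symm]; exact hbxy'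
      -- expand b y y and g y y in terms of y' and x
      have hyy : y = y' + s • x := by simp [hy'def]
      have hbyy : b y y = b y' y' + s^2 * b x x := by
        rw [hyy]
        simp only [map_add, map_smul, LinearMap.add_apply, LinearMap.smul_apply, smul_eq_mul,
          hbxy', hby'x]
        ring
      have hgyy : g y y = g y' y' + s^2 * g x x := by
        rw [hyy]
        simp only [map_add, map_smul, LinearMap.add_apply, LinearMap.smul_apply, smul_eq_mul,
          hgxy', hgy'x]
        ring
      rw [hbyy, hgyy]
      nlinarith [hrat]
    -- Step 3: define c and show b v v = c * g v v for all v
    obtain ⟨x0, hx0⟩ := hg_pos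
    obtain ⟨y0, hy0⟩ := hg_neg
    set c : ℝ := b x0 x0 / g x0 x0 with hcdef
    have hcx0 : b x0 x0 = c * g x0 x0 := (div_mul_cancel₀ (b x0 x0) hx0.ne').symm
    have hy0c : b y0 y0 = c * g y0 y0 := by
      have h2 := hratio x0 y0 hx0 hy0
      rw [hcx0] at h2
      have h3 : (b y0 y0 - c * g y0 y0) * g x0 x0 = 0 := by linear_combination -h2
      have := (mul_eq_zero.mp h3).resolve_right hx0.ne'
      linarith
    have hquad : ∀ v : V, b v v = c * g v v := by
      intro v
      rcases lt_trichotomy (g v v) 0 with hv | hv | hv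
      · have h2 := hratio x0 v hx0 hv
        rw [hcx0] at h2
        have h3 : (b v v - c * g v v) * g x0 x0 = 0 := by linear_combination -h2
        have := (mul_eq_zero.mp h3).resolve_right hx0.ne'
        linarith
      · rw [hnull v hv, hv]; ring
      · have h1 := hratio v y0 hv hy0
        rw [hy0c] at h1
        have h3 : (b v v - c * g v v) * g y0 y0 = 0 := by linear_combination h1
        have := (mul_eq_zero.mp h3).resolve_right hy0.ne
        linarith
    -- Polarization
    refine ⟨c, ?_⟩
    ext u v
    have h1 := hquad (u + v)
    have h2 := hquad u
    have h3 := hquad v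
    have e1 : b (u + v) (u + v) = b u u + 2 * b u v + b v v := by
      simp only [map_add, LinearMap.add_apply, hb_symm v u]; ring
    have e2 : g (u + v) (u + v) = g u u + 2 * g u v + g v v := by
      simp only [map_add, LinearMap.add_apply, hg_symm v u]; ring
    rw [e1, e2] at h1
    simp only [LinearMap.smul_apply, smul_eq_mul]
    linarith
end

section
/- Let V be a finite-dimensional real vector space, let g be a nondegenerate symmetric bilinear form on V which is indefinite (there exist u, w ∈ V with g(u,u) < 0 and g(w,w) > 0), and let b be any symmetric bilinear form on V. Then there exists a constant c ∈ ℝ with b = c·g if and only if there exists a > 0 such that |b(v,v)| ≤ a·|g(v,v)| for every v ∈ V with g(v,v) < 0. -/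
/-- Expansion of a bilinear form on a sum of two vectors. -/
private lemma bilin_exp2 {V : Type*} [AddCommGroup V] [Module ℝ V]
    (B : LinearMap.BilinForm ℝ V) (y : ℝ) (p q : V) :
    B (p + y•q) (p + y•q) = B p p + y*(B p q + B q p) + y^2 * B q q := by
  simp [map_add, map_smul, LinearMap.add_apply, LinearMap.smul_apply, smul_eq_mul]
  ring

/-- Expansion of a bilinear form on a combination of two scaled vectors. -/
private lemma bilin_exp2' {V : Type*} [AddCommGroup V] [Module ℝ V]
    (B : LinearMap.BilinForm ℝ V) (x y : ℝ) (p q : V) :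
    B (x•p + y•q) (x•p + y•q)
      = x^2 * B p p + x*y*(B p q + B q p) + y^2 * B q q := by
  simp [map_add, map_smul, LinearMap.add_apply, LinearMap.smul_apply, smul_eq_mul]
  ring

/-- Expansion of a bilinear form on a combination of three vectors. -/
private lemma bilin_exp3 {V : Type*} [AddCommGroup V] [Module ℝ V]
    (B : LinearMap.BilinForm ℝ V) (z : ℝ) (p q r : V) :
    B (p + q + z•r) (p + q + z•r)
      = B p p + B q q + z^2 * B r r
        + (B p q + B q p) + z*(B p r + B r p) + z*(B q r + B r q) := by
  simp [map_add, map_smul, LinearMap.add_apply, LinearMap.smul_apply, smul_eq_mul]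
  ring

/-- If `b` is bounded by `a·|g|` on timelike vectors and there exists a timelike
vector, then `b` vanishes on `g`-null vectors. -/
private lemma null_vanish {V : Type*} [AddCommGroup V] [Module ℝ V]
    (g b : LinearMap.BilinForm ℝ V)
    (hg_symm : ∀ u v : V, g u v = g v u)
    (hb_symm : ∀ u v : V, b u v = b v u)
    {a : ℝ} (ha : 0 < a) (hbd : ∀ v : V, g v v < 0 → |b v v| ≤ a * |g v v|)
    {u : V} (hu : g u u < 0) {n : V} (hn : g n n = 0) : b n n = 0 := by
  have key : ∀ ε : ℝ, 0 < ε → |b n n| ≤ ε := by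
    intro ε hε
    set α := g n u with hα
    set β := g u u with hβ
    set C : ℝ := 2*a*|α| + a*|β| + 2*|b n u| + |b u u| + 1 with hC
    have hC0 : 0 < C := by positivity
    set δ : ℝ := min (ε / C) 1 with hδdef
    have hδ0 : 0 < δ := lt_min (div_pos hε hC0) one_pos
    have hδ1 : δ ≤ 1 := min_le_right _ _
    have hδ2 : δ^2 ≤ δ := by nlinarith
    obtain ⟨t, htα, htabs⟩ : ∃ t : ℝ, t * α ≤ 0 ∧ |t| = δ := by
      rcases le_or_gt 0 α with h | h
      · exact ⟨-δ, by nlinarith, by rw [abs_neg, abs_of_pos hδ0]⟩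
      · exact ⟨δ, by nlinarith, abs_of_pos hδ0⟩
    have ht2 : t^2 = δ^2 := by rw [← sq_abs, htabs]
    have hgv : g (n + t•u) (n + t•u) = 2*t*α + t^2 * β := by
      rw [bilin_exp2, hn, hg_symm u n, ← hα, ← hβ]; ring
    have hbv : b (n + t•u) (n + t•u) = b n n + 2*t*(b n u) + t^2 * b u u := by
      rw [bilin_exp2, hb_symm u n]; ring
    have hneg : g (n + t•u) (n + t•u) < 0 := by
      rw [hgv]
      have ht0 : 0 < t^2 := by rw [ht2]; positivity
      nlinarith [mul_pos ht0 (neg_pos.mpr hu)]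
    have h1 := hbd _ hneg
    rw [hgv, hbv] at h1
    have e1 : |2*t*α + t^2*β| ≤ 2*δ*|α| + δ*|β| := by
      calc |2*t*α + t^2*β| ≤ |2*t*α| + |t^2*β| := abs_add_le _ _
        _ = 2 * |t| * |α| + t^2 * |β| := by
            rw [abs_mul, abs_mul, abs_mul, abs_two, abs_of_nonneg (sq_nonneg t)]
        _ ≤ 2*δ*|α| + δ*|β| := by
            rw [htabs, ht2]
            nlinarith [abs_nonneg α, abs_nonneg β]
    have e2 : |b n n| ≤ |b n n + 2*t*(b n u) + t^2 * b u u| + 2*δ*|b n u| + δ*|b u u| := by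
      have t1 : |b n n| ≤ |b n n + 2*t*(b n u) + t^2 * b u u|
          + |2*t*(b n u) + t^2 * b u u| := by
        calc |b n n|
            = |(b n n + 2*t*(b n u) + t^2 * b u u) - (2*t*(b n u) + t^2 * b u u)| := by
              ring_nf
          _ ≤ _ := abs_sub _ _
      have t2 : |2*t*(b n u) + t^2 * b u u| ≤ 2*δ*|b n u| + δ*|b u u| := by
        calc |2*t*(b n u) + t^2 * b u u| ≤ |2*t*(b n u)| + |t^2 * b u u| := abs_add_le _ _
          _ = 2 * |t| * |b n u| + t^2 * |b u u| := by
              rw [abs_mul, abs_mul, abs_mul, abs_two, abs_of_nonneg (sq_nonneg t)]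
          _ ≤ 2*δ*|b n u| + δ*|b u u| := by
              rw [htabs, ht2]
              nlinarith [abs_nonneg (b n u), abs_nonneg (b u u)]
      linarith
    have e3 : |b n n| ≤ δ * C := by
      have h2 : a * |2*t*α + t^2*β| ≤ a * (2*δ*|α| + δ*|β|) :=
        mul_le_mul_of_nonneg_left e1 ha.le
      have hCexp : δ * C = 2*a*δ*|α| + a*δ*|β| + 2*δ*|b n u| + δ*|b u u| + δ := by
        rw [hC]; ring
      rw [hCexp]
      linarith [h1, h2, e2, hδ0.le]
    have e4 : δ * C ≤ ε := by
      have hmin : δ ≤ ε / C := min_le_left _ _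
      calc δ * C ≤ (ε / C) * C := mul_le_mul_of_nonneg_right hmin hC0.le
        _ = ε := by field_simp
    linarith
  have h0 : |b n n| ≤ 0 := by
    refine le_of_forall_pos_le_add fun ε hε => ?_
    simpa using key ε hε
  exact abs_eq_zero.mp (le_antisymm h0 (abs_nonneg _))

/-- Bound-type criterion on timelike vectors: `b = c • g` iff `|b(v,v)| ≤ a |g(v,v)|`
for all `v` with `g(v,v) < 0`, for `g` a nondegenerate indefinite symmetric bilinear
form on a finite-dimensional real vector space. -/
theorem stmt_2 {V : Type*} [AddCommGroup V] [Module ℝ V] [FiniteDimensional ℝ V]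
    (g b : LinearMap.BilinForm ℝ V)
    (hg_symm : ∀ u v : V, g u v = g v u)
    (hb_symm : ∀ u v : V, b u v = b v u)
    (hg_nondeg : ∀ v : V, (∀ w : V, g v w = 0) → v = 0)
    (hg_neg : ∃ u : V, g u u < 0)
    (hg_pos : ∃ w : V, g w w > 0) :
    (∃ c : ℝ, b = c • g) ↔
      (∃ a : ℝ, 0 < a ∧ ∀ v : V, g v v < 0 → |b v v| ≤ a * |g v v|) := by
  constructor
  · rintro ⟨c, rfl⟩
    refine ⟨|c| + 1, by positivity, fun v hv => ?_⟩
    have hcv : (c • g) v v = c * g v v := by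
      simp [LinearMap.smul_apply, smul_eq_mul]
    rw [hcv, abs_mul]
    nlinarith [abs_nonneg c, abs_nonneg (g v v)]
  · rintro ⟨a, ha, hbd⟩
    obtain ⟨u, hu⟩ := hg_neg
    have hnull : ∀ n : V, g n n = 0 → b n n = 0 :=
      fun n hn => null_vanish g b hg_symm hb_symm ha hbd hu hn
    have hsymm : LinearMap.IsSymm g := ⟨fun x y => by simpa using hg_symm x y⟩
    obtain ⟨e, he⟩ := LinearMap.BilinForm.exists_orthogonal_basis hsymm
    rw [LinearMap.isOrthoᵢ_def] at he
    have hd : ∀ i, g (e i) (e i) ≠ 0 := by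
      intro i hi
      refine e.ne_zero i (hg_nondeg _ fun w => ?_)
      calc g (e i) w = g (e i) (∑ j, e.repr w j • e j) := by rw [e.sum_repr w]
        _ = 0 := by
            rw [map_sum]
            refine Finset.sum_eq_zero fun j _ => ?_
            rcases eq_or_ne i j with rfl | hij
            · rw [map_smul, hi, smul_zero]
            · rw [map_smul, he i j hij, smul_zero]
    have hexp : ∀ w : V, g w w = ∑ i, (e.repr w i)^2 * g (e i) (e i) := by
      intro w
      conv_lhs => rw [← e.sum_repr w]
      rw [map_sum]
      refine Finset.sum_congr rfl fun i _ => ?_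
      rw [map_smul, map_sum, LinearMap.sum_apply, smul_eq_mul, Finset.sum_eq_single i]
      · rw [map_smul, LinearMap.smul_apply, smul_eq_mul]; ring
      · intro j _ hji
        rw [map_smul, LinearMap.smul_apply, he j i hji, smul_zero]
      · simp
    obtain ⟨k, hk⟩ : ∃ k, g (e k) (e k) < 0 := by
      by_contra h
      push_neg at h
      have : (0:ℝ) ≤ g u u := by
        rw [hexp u]
        exact Finset.sum_nonneg fun i _ => mul_nonneg (sq_nonneg _) (h i)
      linarith
    obtain ⟨m, hm⟩ : ∃ m, 0 < g (e m) (e m) := by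
      by_contra h
      push_neg at h
      obtain ⟨w, hw⟩ := hg_pos
      have : g w w ≤ 0 := by
        rw [hexp w]
        exact Finset.sum_nonpos fun i _ =>
          mul_nonpos_of_nonneg_of_nonpos (sq_nonneg _) (h i)
      linarith
    -- mixed-sign pairs
    have hmixed : ∀ i j, g (e i) (e i) < 0 → 0 < g (e j) (e j) →
        b (e i) (e j) = 0 ∧
          g (e j) (e j) * b (e i) (e i) = g (e i) (e i) * b (e j) (e j) := by
      intro i j hi hj
      have hij : i ≠ j := fun h => by rw [h] at hi; linarith
      obtain ⟨s, hs0, hs2⟩ : ∃ s : ℝ, 0 < s ∧ s^2 = g (e j) (e j) :=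
        ⟨Real.sqrt (g (e j) (e j)), Real.sqrt_pos.mpr hj, Real.sq_sqrt hj.le⟩
      obtain ⟨r, hr0, hr2⟩ : ∃ r : ℝ, 0 < r ∧ r^2 = -(g (e i) (e i)) :=
        ⟨Real.sqrt (-(g (e i) (e i))), Real.sqrt_pos.mpr (by linarith),
          Real.sq_sqrt (by linarith)⟩
      have hge : g (e i) (e j) = 0 := he i j hij
      have hge' : g (e j) (e i) = 0 := he j i hij.symm
      have hnp : g (s•e i + r•e j) (s•e i + r•e j) = 0 := by
        rw [bilin_exp2', hge, hge', hs2, hr2]; ring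
      have hnm : g (s•e i + (-r)•e j) (s•e i + (-r)•e j) = 0 := by
        rw [bilin_exp2', hge, hge']
        have h2 : (-r)^2 = -(g (e i) (e i)) := by rw [neg_pow]; simp [hr2]
        rw [h2, hs2]; ring
      have hbp := hnull _ hnp
      have hbm := hnull _ hnm
      rw [bilin_exp2'] at hbp hbm
      rw [hb_symm (e j) (e i)] at hbp hbm
      have hrr : (-r)^2 = r^2 := by ring
      rw [hrr] at hbm
      have hsr : 0 < s * r := mul_pos hs0 hr0
      have hsum : s^2 * b (e i) (e i) + r^2 * b (e j) (e j) = 0 := by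
        linarith [hbp, hbm]
      constructor
      · nlinarith [hbp, hbm]
      · rw [hs2, hr2] at hsum; linarith [hsum]
    obtain ⟨c, hck⟩ : ∃ c : ℝ, b (e k) (e k) = c * g (e k) (e k) :=
      ⟨b (e k) (e k) / g (e k) (e k), (div_mul_cancel₀ _ (hd k)).symm⟩
    have hdiag_pos : ∀ j, 0 < g (e j) (e j) → b (e j) (e j) = c * g (e j) (e j) := by
      intro j hj
      have h := (hmixed k j hk hj).2
      rw [hck] at h
      have hdk := hd k
      have : g (e k) (e k) * b (e j) (e j) = g (e k) (e k) * (c * g (e j) (e j)) := by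
        nlinarith [h]
      exact mul_left_cancel₀ hdk this
    have hbm' : b (e m) (e m) = c * g (e m) (e m) := hdiag_pos m hm
    have hdiag_neg : ∀ i, g (e i) (e i) < 0 → b (e i) (e i) = c * g (e i) (e i) := by
      intro i hi
      have h := (hmixed i m hi hm).2
      rw [hbm'] at h
      have hdm := hd m
      have : g (e m) (e m) * b (e i) (e i) = g (e m) (e m) * (c * g (e i) (e i)) := by
        nlinarith [h]
      exact mul_left_cancel₀ hdm this
    have hdiag : ∀ i, b (e i) (e i) = c * g (e i) (e i) := by
      intro i
      rcases lt_or_gt_of_ne (hd i) with h | h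
      · exact hdiag_neg i h
      · exact hdiag_pos i h
    have hoff : ∀ i j, i ≠ j → b (e i) (e j) = 0 := by
      intro i j hij
      rcases lt_or_gt_of_ne (hd i) with hi | hi <;>
        rcases lt_or_gt_of_ne (hd j) with hj | hj
      · -- both negative: use m
        have hmi : m ≠ i := fun h => by rw [h] at hm; linarith
        have hmj : m ≠ j := fun h => by rw [h] at hm; linarith
        obtain ⟨z, hz2⟩ : ∃ z : ℝ,
            z^2 = -(g (e i) (e i) + g (e j) (e j)) / g (e m) (e m) :=
          ⟨Real.sqrt _, Real.sq_sqrt (div_nonneg (by linarith) hm.le)⟩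
        have hzd : z^2 * g (e m) (e m) = -(g (e i) (e i) + g (e j) (e j)) := by
          rw [hz2, div_mul_cancel₀ _ (hd m)]
        have hgn : g (e i + e j + z•e m) (e i + e j + z•e m) = 0 := by
          rw [bilin_exp3, he i j hij, he j i hij.symm, he i m (Ne.symm hmi),
            he m i hmi, he j m (Ne.symm hmj), he m j hmj]
          linarith [hzd]
        have hbn := hnull _ hgn
        rw [bilin_exp3] at hbn
        rw [(hmixed i m hi hm).1, (hmixed j m hj hm).1,
          hb_symm (e m) (e i), hb_symm (e m) (e j),
          (hmixed i m hi hm).1, (hmixed j m hj hm).1,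
          hdiag i, hdiag j, hbm', hb_symm (e j) (e i)] at hbn
        have h3 : c * (z^2 * g (e m) (e m))
            = c * (-(g (e i) (e i) + g (e j) (e j))) := by rw [hzd]
        linarith [hbn, h3]
      · exact (hmixed i j hi hj).1
      · rw [hb_symm]; exact (hmixed j i hj hi).1
      · -- both positive: use k
        have hki : k ≠ i := fun h => by rw [h] at hk; linarith
        have hkj : k ≠ j := fun h => by rw [h] at hk; linarith
        obtain ⟨z, hz2⟩ : ∃ z : ℝ,
            z^2 = -(g (e i) (e i) + g (e j) (e j)) / g (e k) (e k) :=
          ⟨Real.sqrt _, Real.sq_sqrt (div_nonneg_of_nonpos (by linarith) hk.le)⟩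
        have hzd : z^2 * g (e k) (e k) = -(g (e i) (e i) + g (e j) (e j)) := by
          rw [hz2, div_mul_cancel₀ _ (hd k)]
        have hgn : g (e i + e j + z•e k) (e i + e j + z•e k) = 0 := by
          rw [bilin_exp3, he i j hij, he j i hij.symm, he i k (Ne.symm hki),
            he k i hki, he j k (Ne.symm hkj), he k j hkj]
          linarith [hzd]
        have hbn := hnull _ hgn
        rw [bilin_exp3] at hbn
        rw [hb_symm (e k) (e i), hb_symm (e k) (e j)] at hbn
        have h1 : b (e i) (e k) = 0 := by
          rw [hb_symm]; exact (hmixed k i hk hi).1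
        have h2 : b (e j) (e k) = 0 := by
          rw [hb_symm]; exact (hmixed k j hk hj).1
        rw [h1, h2, hdiag i, hdiag j, hck, hb_symm (e j) (e i)] at hbn
        have h3 : c * (z^2 * g (e k) (e k))
            = c * (-(g (e i) (e i) + g (e j) (e j))) := by rw [hzd]
        linarith [hbn, h3]
    refine ⟨c, ?_⟩
    apply LinearMap.ext_basis e e
    intro i j
    have hsg : (c • g) (e i) (e j) = c * g (e i) (e j) := by
      simp [LinearMap.smul_apply, smul_eq_mul]
    rw [hsg]
    rcases eq_or_ne i j with rfl | hij
    · exact hdiag i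
    · rw [hoff i j hij, he i j hij, mul_zero]
end

section
/- Let V be a real vector space of finite dimension n ≥ 3 and let g, h be symmetric bilinear forms on V, each of Lorentzian signature (−,+,…,+), i.e. each admits a basis of V in which its matrix is diag(−1, 1, …, 1). Then g and h have the same lightlike vectors, that is {v ≠ 0 | g(v,v) = 0} = {v ≠ 0 | h(v,v) = 0}, if and only if h = c·g for some constant c > 0. -/
private lemma lor_eval {V : Type*} [AddCommGroup V] [Module ℝ V]
    {n : ℕ} (e : Module.Basis (Fin n) ℝ V) (g : LinearMap.BilinForm ℝ V)
    (hge : ∀ i j, g (e i) (e j) = if i = j then (if (i:ℕ)=0 then (-1:ℝ) else 1) else 0)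
    (v w : V) :
    g v w = ∑ i, (e.repr v i) * (e.repr w i) * (if (i:ℕ)=0 then -1 else 1) := by
  conv_lhs => rw [← e.sum_repr v, ← e.sum_repr w]
  simp only [map_sum, map_smul, LinearMap.sum_apply, LinearMap.smul_apply, smul_eq_mul, hge,
    mul_ite, mul_zero, Finset.sum_ite_eq, Finset.sum_ite_eq', Finset.mem_univ, if_true]
  exact Finset.sum_congr rfl fun i _ => by split <;> ring

private lemma lor_sum_split {n : ℕ} (z : Fin n) (hz : (z:ℕ) = 0) (a b : Fin n → ℝ) :
    ∑ i, a i * b i * (if (i:ℕ)=0 then (-1:ℝ) else 1)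
      = a z * b z * (-1) + ∑ i ∈ Finset.univ.erase z, a i * b i := by
  rw [← Finset.add_sum_erase _ (fun i => a i * b i * (if (i:ℕ)=0 then (-1:ℝ) else 1))
    (Finset.mem_univ z)]
  congr 1
  · rw [if_pos hz]
  · refine Finset.sum_congr rfl fun i hi => ?_
    have h0 : (i:ℕ) ≠ 0 := fun hc => (Finset.mem_erase.mp hi).1 (Fin.ext (by rw [hc, hz]))
    rw [if_neg h0, mul_one]

private lemma lor_timelike_not_orth {V : Type*} [AddCommGroup V] [Module ℝ V]
    {n : ℕ} (hn : 1 ≤ n) (e : Module.Basis (Fin n) ℝ V) (g : LinearMap.BilinForm ℝ V)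
    (hge : ∀ i j, g (e i) (e j) = if i = j then (if (i:ℕ)=0 then (-1:ℝ) else 1) else 0)
    (v w : V) (hv : g v v < 0) (hw : g w w < 0) : g v w ≠ 0 := by
  obtain ⟨z, hz⟩ : ∃ z : Fin n, (z:ℕ) = 0 := ⟨⟨0, by omega⟩, rfl⟩
  have split : ∀ x y : V, g x y = (e.repr x z) * (e.repr y z) * (-1)
      + ∑ i ∈ Finset.univ.erase z, (e.repr x i) * (e.repr y i) := by
    intro x y
    rw [lor_eval e g hge, lor_sum_split z hz]
  rw [split] at hv hw
  intro hvw
  rw [split] at hvw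
  set A := e.repr v z with hA
  set B := e.repr w z with hB
  have ha : ∑ i ∈ Finset.univ.erase z, (e.repr v i) * (e.repr v i)
      = ∑ i ∈ Finset.univ.erase z, (e.repr v i) ^ 2 :=
    Finset.sum_congr rfl fun i _ => (sq (e.repr v i)).symm
  have hb : ∑ i ∈ Finset.univ.erase z, (e.repr w i) * (e.repr w i)
      = ∑ i ∈ Finset.univ.erase z, (e.repr w i) ^ 2 :=
    Finset.sum_congr rfl fun i _ => (sq (e.repr w i)).symm
  rw [ha] at hv
  rw [hb] at hw
  set Sa := ∑ i ∈ Finset.univ.erase z, (e.repr v i) ^ 2 with hSadef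
  set Sb := ∑ i ∈ Finset.univ.erase z, (e.repr w i) ^ 2 with hSbdef
  set P := ∑ i ∈ Finset.univ.erase z, (e.repr v i) * (e.repr w i) with hPdef
  have hCS : P ^ 2 ≤ Sa * Sb := by
    rw [hSadef, hSbdef, hPdef]
    exact Finset.sum_mul_sq_le_sq_mul_sq _ _ _
  have hSa : (0:ℝ) ≤ Sa := by
    rw [hSadef]; exact Finset.sum_nonneg fun i _ => sq_nonneg _
  have hSb : (0:ℝ) ≤ Sb := by
    rw [hSbdef]; exact Finset.sum_nonneg fun i _ => sq_nonneg _
  have hAlt : Sa < A * A := by linarith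
  have hBlt : Sb < B * B := by linarith
  have hBpos : 0 < B * B := lt_of_le_of_lt hSb hBlt
  have hPeq : P = A * B := by linarith
  have hcontr : P ^ 2 < P ^ 2 := by
    calc P ^ 2 ≤ Sa * Sb := hCS
      _ ≤ Sa * (B * B) := mul_le_mul_of_nonneg_left hBlt.le hSa
      _ < (A * A) * (B * B) := mul_lt_mul_of_pos_right hAlt hBpos
      _ = P ^ 2 := by rw [hPeq]; ring
  exact absurd hcontr (lt_irrefl _)

set_option maxHeartbeats 2000000 in
/-- Two Lorentzian symmetric bilinear forms on a real vector space of dimension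
`n ≥ 3` have the same lightlike vectors iff one is a positive multiple of the other. -/
theorem stmt_4 {V : Type*} [AddCommGroup V] [Module ℝ V]
    (n : ℕ) (hn : 3 ≤ n)
    (g h : LinearMap.BilinForm ℝ V)
    (hg : ∃ e : Module.Basis (Fin n) ℝ V, ∀ i j, g (e i) (e j) =
      if i = j then (if (i : ℕ) = 0 then -1 else 1) else 0)
    (hh : ∃ e : Module.Basis (Fin n) ℝ V, ∀ i j, h (e i) (e j) =
      if i = j then (if (i : ℕ) = 0 then -1 else 1) else 0) :
    ({v : V | v ≠ 0 ∧ g v v = 0} = {v : V | v ≠ 0 ∧ h v v = 0}) ↔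
      (∃ c : ℝ, 0 < c ∧ h = c • g) := by
  obtain ⟨e, hge⟩ := hg
  obtain ⟨f, hhf⟩ := hh
  constructor
  · intro hset
    obtain ⟨z, hzv⟩ : ∃ z : Fin n, (z:ℕ) = 0 := ⟨⟨0, by omega⟩, rfl⟩
    -- h is symmetric
    have hflip : h = h.flip := by
      refine LinearMap.ext_basis f f fun i j => ?_
      have hfl : h.flip (f i) (f j) = h (f j) (f i) := rfl
      rw [hfl, hhf, hhf]
      rcases eq_or_ne i j with rfl | hij
      · rfl
      · simp [hij, hij.symm]
    have hsymm : ∀ x y : V, h x y = h y x := by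
      intro x y
      conv_lhs => rw [hflip]
      rfl
    -- null vectors of g are null for h
    have null : ∀ v : V, v ≠ 0 → g v v = 0 → h v v = 0 := by
      intro v h1 h2
      exact ((Set.ext_iff.mp hset v).mp ⟨h1, h2⟩).2
    -- nonzeroness
    have nz : ∀ (x y w : ℝ) (i j : Fin n), i ≠ z → j ≠ z → x ≠ 0 →
        x • e z + y • e i + w • e j ≠ 0 := by
      intro x y w i j hi hj hx h0
      have := congrArg (fun u => e.repr u z) h0
      simp [Module.Basis.repr_self, Finsupp.single_apply, hi, hj] at this
      exact hx this
    have gval : ∀ (x y w : ℝ) (i j : Fin n), i ≠ z → j ≠ z → i ≠ j →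
        g (x • e z + y • e i + w • e j) (x • e z + y • e i + w • e j)
          = -x^2 + y^2 + w^2 := by
      intro x y w i j hi hj hij
      have hi0 : (i:ℕ) ≠ 0 := fun hc => hi (Fin.ext (by rw [hc, hzv]))
      have hj0 : (j:ℕ) ≠ 0 := fun hc => hj (Fin.ext (by rw [hc, hzv]))
      have e1 : g (e z) (e z) = -1 := by rw [hge]; simp [hzv]
      have e2 : g (e i) (e i) = 1 := by rw [hge]; simp [hi0]
      have e3 : g (e j) (e j) = 1 := by rw [hge]; simp [hj0]
      have e4 : g (e z) (e i) = 0 := by rw [hge]; simp [Ne.symm hi]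
      have e5 : g (e i) (e z) = 0 := by rw [hge]; simp [hi]
      have e6 : g (e z) (e j) = 0 := by rw [hge]; simp [Ne.symm hj]
      have e7 : g (e j) (e z) = 0 := by rw [hge]; simp [hj]
      have e8 : g (e i) (e j) = 0 := by rw [hge]; simp [hij]
      have e9 : g (e j) (e i) = 0 := by rw [hge]; simp [hij.symm]
      simp only [map_add, map_smul, LinearMap.add_apply, LinearMap.smul_apply, smul_eq_mul,
        e1, e2, e3, e4, e5, e6, e7, e8, e9]
      ring
    have hval : ∀ (x y w : ℝ) (i j : Fin n),
        h (x • e z + y • e i + w • e j) (x • e z + y • e i + w • e j)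
          = x^2 * h (e z) (e z) + y^2 * h (e i) (e i) + w^2 * h (e j) (e j)
            + 2*x*y * h (e z) (e i) + 2*x*w * h (e z) (e j) + 2*y*w * h (e i) (e j) := by
      intro x y w i j
      simp only [map_add, map_smul, LinearMap.add_apply, LinearMap.smul_apply, smul_eq_mul]
      rw [hsymm (e i) (e z), hsymm (e j) (e z), hsymm (e j) (e i)]
      ring
    -- auxiliary index
    have pick : ∀ i : Fin n, i ≠ z → ∃ j : Fin n, j ≠ z ∧ i ≠ j := by
      intro i hi
      by_cases hc : (i:ℕ) = 1
      · refine ⟨⟨2, by omega⟩, fun h2 => ?_, fun h2 => ?_⟩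
        · have := congrArg Fin.val h2
          rw [hzv] at this
          simp at this
        · have := congrArg Fin.val h2
          rw [hc] at this
          simp at this
      · refine ⟨⟨1, by omega⟩, fun h2 => ?_, fun h2 => ?_⟩
        · have := congrArg Fin.val h2
          rw [hzv] at this
          simp at this
        · exact hc (by rw [h2])
    have step1 : ∀ i : Fin n, i ≠ z →
        h (e z) (e i) = 0 ∧ h (e i) (e i) = - h (e z) (e z) := by
      intro i hi
      obtain ⟨j, hj, hij⟩ := pick i hi
      have hA := null _ (nz 1 1 0 i j hi hj one_ne_zero)
        (by rw [gval 1 1 0 i j hi hj hij]; ring)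
      have hB := null _ (nz 1 (-1) 0 i j hi hj one_ne_zero)
        (by rw [gval 1 (-1) 0 i j hi hj hij]; ring)
      rw [hval 1 1 0 i j] at hA
      rw [hval 1 (-1) 0 i j] at hB
      constructor <;> linarith [hA, hB]
    have step2 : ∀ i j : Fin n, i ≠ z → j ≠ z → i ≠ j → h (e i) (e j) = 0 := by
      intro i j hi hj hij
      have hs2 : Real.sqrt 2 ≠ 0 := by positivity
      have hs2sq : Real.sqrt 2 ^ 2 = 2 := Real.sq_sqrt (by norm_num)
      have hC := null _ (nz (Real.sqrt 2) 1 1 i j hi hj hs2)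
        (by rw [gval (Real.sqrt 2) 1 1 i j hi hj hij, hs2sq]; ring)
      rw [hval (Real.sqrt 2) 1 1 i j, hs2sq,
        (step1 i hi).1, (step1 i hi).2, (step1 j hj).1, (step1 j hj).2] at hC
      linarith [hC]
    obtain ⟨c, hcdef⟩ : ∃ c : ℝ, c = - h (e z) (e z) := ⟨_, rfl⟩
    have heq : h = c • g := by
      refine LinearMap.BilinForm.ext_basis e fun i j => ?_
      have hsm : (c • g) (e i) (e j) = c * g (e i) (e j) := rfl
      rw [hsm, hge]
      rcases eq_or_ne z i with hiz | hi
      · subst hiz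
        rcases eq_or_ne z j with hjz | hj
        · subst hjz
          rw [if_pos rfl, if_pos hzv, hcdef]; ring
        · rw [if_neg hj, mul_zero]
          exact (step1 j hj.symm).1
      · rcases eq_or_ne z j with hjz | hj
        · subst hjz
          rw [if_neg (fun hc : i = z => hi hc.symm), mul_zero, hsymm (e i) (e z)]
          exact (step1 i hi.symm).1
        · rcases eq_or_ne i j with rfl | hij
          · have hi0 : (i:ℕ) ≠ 0 := fun hc => hi (Fin.ext (by rw [hzv, hc]))
            rw [if_pos rfl, if_neg hi0, mul_one, hcdef]
            linarith [(step1 i hi.symm).2]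
          · rw [if_neg hij, mul_zero]
            exact step2 i j hi.symm hj.symm hij
    have hc0 : c ≠ 0 := by
      intro hc
      have h1 : h (f z) (f z) = -1 := by rw [hhf, if_pos rfl, if_pos hzv]
      rw [heq, hc] at h1
      simp at h1
    have hcpos : 0 < c := by
      rcases lt_or_gt_of_ne hc0 with hneg | hpos
      · exfalso
        obtain ⟨i1, hi1⟩ : ∃ i1 : Fin n, (i1:ℕ) = 1 := ⟨⟨1, by omega⟩, rfl⟩
        obtain ⟨i2, hi2⟩ : ∃ i2 : Fin n, (i2:ℕ) = 2 := ⟨⟨2, by omega⟩, rfl⟩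
        have h1 : h (f i1) (f i1) = 1 := by
          rw [hhf, if_pos rfl, if_neg (by rw [hi1]; norm_num)]
        have h2 : h (f i2) (f i2) = 1 := by
          rw [hhf, if_pos rfl, if_neg (by rw [hi2]; norm_num)]
        have h12 : h (f i1) (f i2) = 0 := by
          rw [hhf, if_neg (fun hc => by rw [hc, hi2] at hi1; norm_num at hi1)]
        rw [heq] at h1 h2 h12
        have e1 : c * g (f i1) (f i1) = 1 := h1
        have e2 : c * g (f i2) (f i2) = 1 := h2
        have e12 : c * g (f i1) (f i2) = 0 := h12
        have g1 : g (f i1) (f i1) < 0 := by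
          by_contra hG
          push_neg at hG
          nlinarith [mul_nonpos_of_nonpos_of_nonneg hneg.le hG]
        have g2 : g (f i2) (f i2) < 0 := by
          by_contra hG
          push_neg at hG
          nlinarith [mul_nonpos_of_nonpos_of_nonneg hneg.le hG]
        have g12 : g (f i1) (f i2) = 0 := by
          rcases mul_eq_zero.mp e12 with hc' | hc'
          · exact absurd hc' hc0
          · exact hc'
        exact lor_timelike_not_orth (by omega) e g hge _ _ g1 g2 g12
      · exact hpos
    exact ⟨c, hcpos, heq⟩
  · rintro ⟨c, hc, rfl⟩
    ext v
    simp only [Set.mem_setOf_eq, LinearMap.smul_apply, smul_eq_mul]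
    constructor
    · rintro ⟨h1, h2⟩
      exact ⟨h1, by rw [h2, mul_zero]⟩
    · rintro ⟨h1, h2⟩
      exact ⟨h1, (mul_eq_zero.mp h2).resolve_left hc.ne'⟩
end

section
/- Let M be a nonempty compact topological space and let ≪ be a transitive binary relation on M such that I⁺(p) = {q ∈ M | p ≪ q} is open for every p ∈ M and the sets I⁺(p), p ∈ M, cover M. Then there exists p ∈ M with p ≪ p. -/
/-- Abstract version of "no compact spacetime is chronological": if `≪` is a
transitive relation on a nonempty compact space whose futures `I⁺(p)` are open
and cover the space, then some point satisfies `p ≪ p`. -/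
theorem stmt_5 {M : Type*} [TopologicalSpace M] [Nonempty M] [CompactSpace M]
    (lt : M → M → Prop)
    (htrans : ∀ {a b c : M}, lt a b → lt b c → lt a c)
    (hopen : ∀ p : M, IsOpen {q : M | lt p q})
    (hcover : ∀ x : M, ∃ p : M, lt p x) :
    ∃ p : M, lt p p := by
  classical
  -- finite subcover
  obtain ⟨t, ht⟩ := IsCompact.elim_finite_subcover isCompact_univ
    (fun p : M => {q : M | lt p q}) hopen
    (by intro x _; obtain ⟨p, hp⟩ := hcover x; exact Set.mem_iUnion.2 ⟨p, hp⟩)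
  -- choice function landing in t
  have hmem : ∀ x : M, ∃ p ∈ t, lt p x := by
    intro x
    have := ht (Set.mem_univ x)
    simpa using this
  choose g hg hglt using hmem
  -- chain lemma
  have hchain : ∀ (x : M) (n : ℕ), 0 < n → lt (g^[n] x) x := by
    intro x n hn
    induction n with
    | zero => exact absurd hn (lt_irrefl 0)
    | succ k ih =>
      rcases Nat.eq_zero_or_pos k with hk | hk
      · subst hk; simpa using hglt x
      · have h1 : lt (g^[k+1] x) (g^[k] x) := by
          rw [Function.iterate_succ_apply']
          exact hglt _
        exact htrans h1 (ih hk)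
  -- pigeonhole on iterates
  have x0 : M := Classical.choice ‹Nonempty M›
  have hfin : ∀ n : ℕ, g^[n+1] x0 ∈ (t : Set M) := by
    intro n; rw [Function.iterate_succ_apply']; exact hg _
  obtain ⟨m, n, hmn, heq⟩ :=
    Finite.exists_ne_map_eq_of_infinite
      (fun n : ℕ => (⟨g^[n+1] x0, hfin n⟩ : (t : Set M)))
  have heq' : g^[m+1] x0 = g^[n+1] x0 := congrArg Subtype.val heq
  -- wlog m < n
  have key : ∀ a b : ℕ, a < b → g^[a+1] x0 = g^[b+1] x0 → ∃ p, lt p p := by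
    intro a b hab he
    refine ⟨g^[a+1] x0, ?_⟩
    have h1 : g^[b+1] x0 = g^[b - a] (g^[a+1] x0) := by
      rw [← Function.iterate_add_apply]
      congr 1
      omega
    have h2 : lt (g^[b - a] (g^[a+1] x0)) (g^[a+1] x0) :=
      hchain _ _ (by omega)
    rw [← h1, ← he] at h2
    exact h2
  rcases lt_or_gt_of_ne hmn with h | h
  · exact key m n h heq'
  · exact key n m h heq'.symm
end

section
/- Let M be a topological space and ≪ a binary relation on M such that I⁻(q) = {p ∈ M | p ≪ q} is open for every q ∈ M and such that every neighborhood of every point x meets I⁺(x) = {y ∈ M | x ≪ y} (FutDense). Let F ⊆ M be a future set, i.e. F = I⁺(F) where I⁺(F) = {q ∈ M | ∃ f ∈ F, f ≪ q}. Then the closure of F equals {p ∈ M | I⁺(p) ⊆ F}. -/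
/-- If each past `I⁻(q)` is open and every neighborhood of `x` meets `I⁺(x)`,
then for a future set `F` (i.e. `I⁺(F) = F`) the closure of `F` is
`{p | I⁺(p) ⊆ F}`. -/
theorem stmt_6 {M : Type*} [TopologicalSpace M]
    (lt : M → M → Prop)
    (hopen : ∀ q : M, IsOpen {p : M | lt p q})
    (hfd : ∀ x : M, ∀ U ∈ nhds x, ∃ y ∈ U, lt x y)
    (F : Set M) (hF : {q : M | ∃ f ∈ F, lt f q} = F) :
    closure F = {p : M | {q : M | lt p q} ⊆ F} := by
  ext p
  constructor
  · intro hp q hq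
    have hU : {r : M | lt r q} ∈ nhds p := (hopen q).mem_nhds hq
    obtain ⟨f, hfF, hfq⟩ := mem_closure_iff_nhds.mp hp _ hU
    exact hF ▸ ⟨f, hfq, hfF⟩
  · intro hp
    rw [mem_closure_iff_nhds]
    intro U hU
    obtain ⟨y, hyU, hy⟩ := hfd p U hU
    exact ⟨y, hyU, hp hy⟩
end

section
/- Let M be a topological space and let ≪, ≤ be binary relations on M such that: p ≪ q implies p ≤ q; the set I = {(p,q) ∈ M × M | p ≪ q} is open in the product topology; (PushUp) p ≤ q and q ≪ r imply p ≪ r, and p ≪ q and q ≤ r imply p ≪ r; and every neighborhood of every point x meets both I⁺(x) = {y | x ≪ y} and I⁻(x) = {y | y ≪ x}. Let J = {(p,q) ∈ M × M | p ≤ q}. Then, in M × M: the closure of J equals the closure of I, the interior of J equals I, and consequently the boundary of J equals the boundary of I. -/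
/-- In `M × M`: the closure of the causal relation `J` equals the closure of the
chronological relation `I`, the interior of `J` equals `I`, and hence their
boundaries coincide. -/
theorem stmt_7 {M : Type*} [TopologicalSpace M]
    (lt le : M → M → Prop)
    (h_sub : ∀ {p q : M}, lt p q → le p q)
    (h_open : IsOpen {pq : M × M | lt pq.1 pq.2})
    (h_pushup₁ : ∀ {p q r : M}, le p q → lt q r → lt p r)
    (h_pushup₂ : ∀ {p q r : M}, lt p q → le q r → lt p r)
    (h_fd : ∀ x : M, ∀ U ∈ nhds x, ∃ y ∈ U, lt x y)
    (h_pd : ∀ x : M, ∀ U ∈ nhds x, ∃ y ∈ U, lt y x) :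
    closure {pq : M × M | le pq.1 pq.2} = closure {pq : M × M | lt pq.1 pq.2} ∧
    interior {pq : M × M | le pq.1 pq.2} = {pq : M × M | lt pq.1 pq.2} ∧
    frontier {pq : M × M | le pq.1 pq.2} = frontier {pq : M × M | lt pq.1 pq.2} := by
  have hIJ : {pq : M × M | lt pq.1 pq.2} ⊆ {pq : M × M | le pq.1 pq.2} :=
    fun pq h => h_sub h
  have hclo : closure {pq : M × M | le pq.1 pq.2} = closure {pq : M × M | lt pq.1 pq.2} := by
    refine le_antisymm ?_ (closure_mono hIJ)
    refine closure_minimal (fun pq hpq => ?_) isClosed_closure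
    rw [mem_closure_iff_nhds]
    intro t ht
    rw [mem_nhds_prod_iff] at ht
    obtain ⟨U, hU, V, hV, hUV⟩ := ht
    obtain ⟨q', hq'V, hq'⟩ := h_fd pq.2 V hV
    exact ⟨(pq.1, q'), hUV ⟨mem_of_mem_nhds hU, hq'V⟩, h_pushup₁ hpq hq'⟩
  have hint : interior {pq : M × M | le pq.1 pq.2} = {pq : M × M | lt pq.1 pq.2} := by
    refine le_antisymm ?_ (fun pq h => interior_maximal hIJ h_open h)
    intro pq hpq
    rw [mem_interior_iff_mem_nhds, mem_nhds_prod_iff] at hpq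
    obtain ⟨U, hU, V, hV, hUV⟩ := hpq
    obtain ⟨q', hq'V, hq'⟩ := h_pd pq.2 V hV
    have hle : le pq.1 q' := hUV (show (pq.1, q') ∈ U ×ˢ V from ⟨mem_of_mem_nhds hU, hq'V⟩)
    exact h_pushup₁ hle hq'
  refine ⟨hclo, hint, ?_⟩
  unfold frontier
  rw [hclo, hint, h_open.interior_eq]
end

section
/- Let M be a topological space and ≪ a transitive binary relation on M such that I⁺(p) = {q | p ≪ q} and I⁻(p) = {q | q ≪ p} are open for every p ∈ M, and satisfying the interpolation property: whenever r ≪ q there exists s with r ≪ s ≪ q. Then the set-valued map I⁻ is inner continuous: for every q ∈ M and every compact set K ⊆ I⁻(q) there is an open neighborhood U of q such that K ⊆ I⁻(q') for every q' ∈ U. -/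
/-- Inner continuity of the set-valued map `I⁻`: for every `q` and every compact
`K ⊆ I⁻(q)` there is an open neighborhood `U` of `q` with `K ⊆ I⁻(q')` for all
`q' ∈ U`. -/
theorem stmt_8 {M : Type*} [TopologicalSpace M]
    (lt : M → M → Prop)
    (htrans : ∀ {a b c : M}, lt a b → lt b c → lt a c)
    (hopen_fut : ∀ p : M, IsOpen {q : M | lt p q})
    (hopen_past : ∀ p : M, IsOpen {q : M | lt q p})
    (hinterp : ∀ {r q : M}, lt r q → ∃ s : M, lt r s ∧ lt s q) :
    ∀ q : M, ∀ K : Set M, IsCompact K → K ⊆ {y : M | lt y q} →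
      ∃ U : Set M, IsOpen U ∧ q ∈ U ∧ ∀ q' ∈ U, K ⊆ {y : M | lt y q'} := by
  intro q K hK hKsub
  choose s hs1 hs2 using fun (k : K) => hinterp (hKsub k.2)
  obtain ⟨t, ht⟩ := hK.elim_finite_subcover (fun k : K => {y : M | lt y (s k)})
    (fun k => hopen_past (s k)) (fun x hx => Set.mem_iUnion.2 ⟨⟨x, hx⟩, hs1 ⟨x, hx⟩⟩)
  refine ⟨⋂ k ∈ t, {y : M | lt (s k) y}, ?_, ?_, ?_⟩
  · exact isOpen_biInter_finset fun k _ => hopen_fut (s k)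
  · exact Set.mem_iInter₂.2 fun k _ => hs2 k
  · intro q' hq' x hx
    obtain ⟨k, hkt, hxk⟩ := Set.mem_iUnion₂.1 (ht hx)
    exact htrans hxk (Set.mem_iInter₂.1 hq' k hkt)
end

section
/- Let M be a topological space and ≪ a transitive binary relation on M such that {(p,q) ∈ M × M | p ≪ q} is open in the product topology and every neighborhood of every point x meets both I⁺(x) = {y | x ≪ y} and I⁻(x) = {y | y ≪ x}. Then for any fixed pair (p,q) ∈ M × M the following three statements are equivalent: (i) if I⁺(q) ⊆ I⁺(p) then I⁻(p) ⊆ I⁻(q); (ii) if q ∈ cl(I⁺(p)) then p ∈ cl(I⁻(q)); (iii) if q ∈ ∂I⁺(p) then p ∈ ∂I⁻(q); where cl denotes topological closure and ∂ topological boundary. -/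
section Aux

variable {M : Type*} [TopologicalSpace M] (lt : M → M → Prop)

lemma aux_future_open (h_open : IsOpen {pq : M × M | lt pq.1 pq.2}) (p : M) :
    IsOpen {y : M | lt p y} :=
  h_open.preimage (Continuous.prodMk_right p)

lemma aux_past_open (h_open : IsOpen {pq : M × M | lt pq.1 pq.2}) (q : M) :
    IsOpen {y : M | lt y q} :=
  h_open.preimage (continuous_id.prodMk continuous_const)

lemma aux_cl_future (htrans : ∀ {a b c : M}, lt a b → lt b c → lt a c)
    (h_open : IsOpen {pq : M × M | lt pq.1 pq.2})
    (h_fd : ∀ x : M, ∀ U ∈ nhds x, ∃ y ∈ U, lt x y) (p q : M) :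
    q ∈ closure {y : M | lt p y} ↔ {y : M | lt q y} ⊆ {y : M | lt p y} := by
  constructor
  · intro hq y hy
    have hop : IsOpen {z : M | lt z y} := aux_past_open lt h_open y
    rcases (mem_closure_iff.mp hq) _ hop hy with ⟨z, hz1, hz2⟩
    exact htrans hz2 hz1
  · intro hsub
    have : q ∈ closure {y : M | lt q y} := by
      rw [mem_closure_iff_nhds]
      intro U hU
      rcases h_fd q U hU with ⟨y, hyU, hy⟩
      exact ⟨y, hyU, hy⟩
    exact closure_mono hsub this

lemma aux_cl_past (htrans : ∀ {a b c : M}, lt a b → lt b c → lt a c)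
    (h_open : IsOpen {pq : M × M | lt pq.1 pq.2})
    (h_pd : ∀ x : M, ∀ U ∈ nhds x, ∃ y ∈ U, lt y x) (p q : M) :
    p ∈ closure {y : M | lt y q} ↔ {y : M | lt y p} ⊆ {y : M | lt y q} := by
  constructor
  · intro hp y hy
    have hop : IsOpen {z : M | lt y z} := aux_future_open lt h_open y
    rcases (mem_closure_iff.mp hp) _ hop hy with ⟨z, hz1, hz2⟩
    exact htrans hz1 hz2
  · intro hsub
    have : p ∈ closure {y : M | lt y p} := by
      rw [mem_closure_iff_nhds]
      intro U hU
      rcases h_pd p U hU with ⟨y, hyU, hy⟩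
      exact ⟨y, hyU, hy⟩
    exact closure_mono hsub this

end Aux

/-- Equivalence of the three formulations of past reflectivity at a fixed pair
`(p, q)`. -/
theorem stmt_9 {M : Type*} [TopologicalSpace M]
    (lt : M → M → Prop)
    (htrans : ∀ {a b c : M}, lt a b → lt b c → lt a c)
    (h_open : IsOpen {pq : M × M | lt pq.1 pq.2})
    (h_fd : ∀ x : M, ∀ U ∈ nhds x, ∃ y ∈ U, lt x y)
    (h_pd : ∀ x : M, ∀ U ∈ nhds x, ∃ y ∈ U, lt y x)
    (p q : M) :
    ((({y : M | lt q y} ⊆ {y : M | lt p y}) → ({y : M | lt y p} ⊆ {y : M | lt y q})) ↔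
      (q ∈ closure {y : M | lt p y} → p ∈ closure {y : M | lt y q})) ∧
    ((q ∈ closure {y : M | lt p y} → p ∈ closure {y : M | lt y q}) ↔
      (q ∈ frontier {y : M | lt p y} → p ∈ frontier {y : M | lt y q})) := by
  have hF := aux_cl_future lt @htrans h_open h_fd p q
  have hP := aux_cl_past lt @htrans h_open h_pd p q
  have hFopen := aux_future_open lt h_open p
  have hPopen := aux_past_open lt h_open q
  have hfrF : frontier {y : M | lt p y} = closure {y : M | lt p y} \ {y : M | lt p y} :=
    hFopen.frontier_eq
  have hfrP : frontier {y : M | lt y q} = closure {y : M | lt y q} \ {y : M | lt y q} :=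
    hPopen.frontier_eq
  constructor
  · constructor
    · intro h hcl
      exact hP.mpr (h (hF.mp hcl))
    · intro h hsub
      exact hP.mp (h (hF.mpr hsub))
  · constructor
    · intro h hq
      rw [hfrF] at hq
      rw [hfrP]
      refine ⟨h hq.1, ?_⟩
      intro hpq
      exact hq.2 hpq
    · intro h hcl
      by_cases hpq : lt p q
      · exact subset_closure hpq
      · have : q ∈ frontier {y : M | lt p y} := by
          rw [hfrF]; exact ⟨hcl, hpq⟩
        have h2 := h this
        rw [hfrP] at h2
        exact h2.1
end

section
/- Let M be a topological space and ≪ a transitive binary relation on M such that {(p,q) ∈ M × M | p ≪ q} is open in the product topology and every neighborhood of every point x meets I⁻(x) = {y | y ≪ x} (PastDense). Say the relation is past reflecting at q if for every p ∈ M, q ∈ cl(I⁺(p)) implies p ∈ cl(I⁻(q)). Then ≪ is past reflecting at q if and only if for every p ∈ M, (p,q) ∈ cl({(x,y) ∈ M × M | x ≪ y}) (closure taken in M × M) implies p ∈ cl(I⁻(q)). -/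
/-- Past reflectivity at `q` is equivalent to: for every `p`, if `(p,q)` lies in
the closure of the chronological relation in `M × M` then `p ∈ cl(I⁻(q))`. -/
theorem stmt_10 {M : Type*} [TopologicalSpace M]
    (lt : M → M → Prop)
    (htrans : ∀ {a b c : M}, lt a b → lt b c → lt a c)
    (h_open : IsOpen {pq : M × M | lt pq.1 pq.2})
    (h_pd : ∀ x : M, ∀ U ∈ nhds x, ∃ y ∈ U, lt y x)
    (q : M) :
    (∀ p : M, q ∈ closure {y : M | lt p y} → p ∈ closure {y : M | lt y q}) ↔
    (∀ p : M, (p, q) ∈ closure {xy : M × M | lt xy.1 xy.2} →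
      p ∈ closure {y : M | lt y q}) := by
  constructor
  · intro h p hp
    rw [mem_closure_iff]
    intro U hU hpU
    obtain ⟨p', hp'U, hp'p⟩ := h_pd p U (hU.mem_nhds hpU)
    have hopen' : IsOpen {x : M | lt p' x} :=
      h_open.preimage (Continuous.prodMk_right p')
    have hq : q ∈ closure {y : M | lt p' y} := by
      rw [mem_closure_iff]
      intro W hW hqW
      rw [mem_closure_iff] at hp
      obtain ⟨⟨a, b⟩, hab, habrel⟩ := hp ({x : M | lt p' x} ×ˢ W)
        (hopen'.prod hW) ⟨hp'p, hqW⟩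
      exact ⟨b, hab.2, htrans hab.1 habrel⟩
    have := h p' hq
    rw [mem_closure_iff] at this
    obtain ⟨y, hyU, hy⟩ := this U hU hp'U
    exact ⟨y, hyU, hy⟩
  · intro h p hq
    apply h p
    rw [mem_closure_iff]
    intro O hO hpqO
    obtain ⟨U, V, hUo, hVo, hpU, hqV, hUV⟩ := isOpen_prod_iff.mp hO p q hpqO
    rw [mem_closure_iff] at hq
    obtain ⟨y, hyV, hy⟩ := hq V hVo hqV
    exact ⟨(p, y), hUV ⟨hpU, hyV⟩, hy⟩
end

section
/- Let M be a first-countable topological space and ≪ a transitive binary relation on M such that {(p,q) ∈ M × M | p ≪ q} is open in the product topology and every neighborhood of every point x meets I⁻(x) = {y | y ≪ x} (PastDense). Say the set-valued map I⁻ is outer continuous at p if for every compact K ⊆ M \ cl(I⁻(p)) there is an open neighborhood U of p with K ∩ cl(I⁻(p')) = ∅ for every p' ∈ U; say ≪ is past reflecting at p if for every s ∈ M, p ∈ cl(I⁺(s)) implies s ∈ cl(I⁻(p)). Then I⁻ is outer continuous at p if and only if ≪ is past reflecting at p. -/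
/-- Outer continuity of `I⁻` at `p` is equivalent to past reflectivity at `p`. -/
theorem stmt_11 {M : Type*} [TopologicalSpace M]
    [FirstCountableTopology M]
    (lt : M → M → Prop)
    (htrans : ∀ {a b c : M}, lt a b → lt b c → lt a c)
    (h_open : IsOpen {pq : M × M | lt pq.1 pq.2})
    (h_pd : ∀ x : M, ∀ U ∈ nhds x, ∃ y ∈ U, lt y x)
    (p : M) :
    (∀ K : Set M, IsCompact K → K ⊆ (closure {y : M | lt y p})ᶜ →
      ∃ U : Set M, IsOpen U ∧ p ∈ U ∧
        ∀ p' ∈ U, K ∩ closure {y : M | lt y p'} = ∅) ↔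
    (∀ s : M, p ∈ closure {y : M | lt s y} → s ∈ closure {y : M | lt y p}) := by
  have hslice : ∀ y : M, IsOpen {x : M | lt y x} := fun y =>
    h_open.preimage (Continuous.prodMk_right y)
  constructor
  · intro hoc s hs
    by_contra hns
    obtain ⟨U, hUopen, hpU, hU⟩ := hoc {s} isCompact_singleton
      (by simpa [Set.singleton_subset_iff] using hns)
    obtain ⟨q, hqU, hq⟩ := mem_closure_iff.mp hs U hUopen hpU
    have hsq : s ∈ closure {y : M | lt y q} := subset_closure hq
    have : s ∈ ({s} : Set M) ∩ closure {y : M | lt y q} := ⟨rfl, hsq⟩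
    rw [hU q hqU] at this
    exact this
  · intro hpr K hK hKsub
    by_contra hno
    push_neg at hno
    obtain ⟨u, hu⟩ := (nhds p).exists_antitone_basis
    have hsel : ∀ n : ℕ, ∃ p', p' ∈ interior (u n) ∧
        (K ∩ closure {y : M | lt y p'}).Nonempty := by
      intro n
      have hpmem : p ∈ interior (u n) := mem_interior_iff_mem_nhds.mpr (hu.mem n)
      obtain ⟨p', hp', hne⟩ := hno (interior (u n)) isOpen_interior hpmem
      exact ⟨p', hp', hne⟩
    choose ps hps hne using hsel
    choose ks hks using hne
    have hptend : Filter.Tendsto ps Filter.atTop (nhds p) :=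
      hu.tendsto fun n => interior_subset (hps n)
    obtain ⟨k, hkK, φ, hφ, hktend⟩ := hK.tendsto_subseq fun n => (hks n).1
    have hptend' : Filter.Tendsto (ps ∘ φ) Filter.atTop (nhds p) :=
      hptend.comp hφ.tendsto_atTop
    have hkcl : k ∈ closure {y : M | lt y p} := by
      rw [← closure_closure]
      rw [mem_closure_iff_nhds]
      intro V hV
      obtain ⟨y, hyV, hyk⟩ := h_pd k V hV
      refine ⟨y, hyV, ?_⟩
      apply hpr
      rw [mem_closure_iff_nhds]
      intro W hW
      have hev1 : ∀ᶠ n in Filter.atTop, ks (φ n) ∈ {x : M | lt y x} :=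
        hktend.eventually ((hslice y).mem_nhds hyk)
      have hev2 : ∀ᶠ n in Filter.atTop, ps (φ n) ∈ W := hptend'.eventually_mem hW
      obtain ⟨n, hn1, hn2⟩ := (hev1.and hev2).exists
      have hkscl : ks (φ n) ∈ closure {y : M | lt y (ps (φ n))} := (hks (φ n)).2
      obtain ⟨z, hz1, hz2⟩ := mem_closure_iff.mp hkscl _ (hslice y) hn1
      exact ⟨ps (φ n), hn2, htrans hz1 hz2⟩
    exact hKsub hkK hkcl
end

section
/- Let M be a first-countable topological space and ≪ a transitive binary relation on M such that {(p,q) ∈ M × M | p ≪ q} is open in the product topology and every neighborhood of every point x meets both I⁺(x) = {y | x ≪ y} and I⁻(x) = {y | y ≪ x}. Let μ be a finite Borel measure on M which is positive on every nonempty open set, inner regular on open sets with respect to compact sets, and satisfies μ(cl(I⁻(x)) \ I⁻(x)) = 0 for every x ∈ M. Define the past volume function t⁻(x) = μ(I⁻(x)). Then for each p ∈ M, t⁻ is upper semicontinuous at p if and only if I⁻ is outer continuous at p (i.e. for every compact K ⊆ M \ cl(I⁻(p)) there is a neighborhood U of p with K ∩ cl(I⁻(p')) = ∅ for all p' ∈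 U). -/
open MeasureTheory Filter Topology Set

/-- For an admissible measure `μ`, the past volume function `t⁻(x) = μ(I⁻(x))`
is upper semicontinuous at `p` iff the set-valued map `I⁻` is outer continuous
at `p`. -/
theorem stmt_12 {M : Type*} [TopologicalSpace M]
    [FirstCountableTopology M]
    [MeasurableSpace M] [BorelSpace M]
    (lt : M → M → Prop)
    (htrans : ∀ {a b c : M}, lt a b → lt b c → lt a c)
    (h_open : IsOpen {pq : M × M | lt pq.1 pq.2})
    (h_fd : ∀ x : M, ∀ U ∈ nhds x, ∃ y ∈ U, lt x y)
    (h_pd : ∀ x : M, ∀ U ∈ nhds x, ∃ y ∈ U, lt y x)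
    (μ : Measure M) [IsFiniteMeasure μ]
    (hpos : ∀ U : Set M, IsOpen U → U.Nonempty → 0 < μ U)
    (hreg : μ.InnerRegularWRT IsCompact IsOpen)
    (hbd : ∀ x : M, μ (closure {y : M | lt y x} \ {y : M | lt y x}) = 0)
    (p : M) :
    UpperSemicontinuousAt (fun x : M => μ {y : M | lt y x}) p ↔
    (∀ K : Set M, IsCompact K → K ⊆ (closure {y : M | lt y p})ᶜ →
      ∃ U : Set M, IsOpen U ∧ p ∈ U ∧
        ∀ p' ∈ U, K ∩ closure {y : M | lt y p'} = ∅) := by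
  -- basic openness facts
  have hIopen : ∀ x : M, IsOpen {y : M | lt y x} := fun x =>
    h_open.preimage (Continuous.prodMk_left x)
  have hFopen : ∀ x : M, IsOpen {y : M | lt x y} := fun x =>
    h_open.preimage (Continuous.prodMk_right x)
  have hclos : ∀ x : M, μ (closure {y : M | lt y x}) = μ {y : M | lt y x} := by
    intro x
    refine le_antisymm ?_ (measure_mono subset_closure)
    calc μ (closure {y : M | lt y x})
        ≤ μ ({y : M | lt y x} ∪ (closure {y : M | lt y x} \ {y : M | lt y x})) :=
          measure_mono fun y hy => by
            by_cases h : lt y x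
            · exact Or.inl h
            · exact Or.inr ⟨hy, h⟩
      _ ≤ μ {y : M | lt y x} + μ (closure {y : M | lt y x} \ {y : M | lt y x}) :=
          measure_union_le _ _
      _ = μ {y : M | lt y x} := by rw [hbd x, add_zero]
  constructor
  · -- usc → outer continuity
    intro husc K hK hKsub
    by_contra hcon
    push_neg at hcon
    obtain ⟨b, hb⟩ := (nhds p).exists_antitone_basis
    have hbmem : ∀ n, b n ∈ nhds p := fun n => hb.toHasBasis.mem_of_mem trivial
    choose pn hpn hKn using fun n : ℕ => hcon (interior (b n)) isOpen_interior
      (mem_interior_iff_mem_nhds.2 (hbmem n))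
    have hpn' : ∀ n, pn n ∈ b n := fun n => interior_subset (hpn n)
    have hpnt : Tendsto pn atTop (nhds p) := hb.tendsto hpn'
    have hqn : ∀ n, ∃ q, q ∈ K ∧ q ∈ closure {y : M | lt y (pn n)} := fun n =>
      let ⟨q, hq1, hq2⟩ := hKn n; ⟨q, hq1, hq2⟩
    choose qn hqnK hqncl using hqn
    obtain ⟨q, hqK, φ, hφ, hqlim⟩ := hK.tendsto_subseq hqnK
    -- pick r ≪ q with r outside the closure of I⁻(p)
    have hqnot : q ∈ (closure {y : M | lt y p})ᶜ := hKsub hqK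
    obtain ⟨r, hrmem, hrq⟩ := h_pd q _
      ((isOpen_compl_iff.2 isClosed_closure).mem_nhds hqnot)
    -- a neighborhood W of r disjoint from I⁻(p)
    have hrnc : r ∉ closure {y : M | lt y p} := hrmem
    rw [mem_closure_iff] at hrnc
    push_neg at hrnc
    obtain ⟨W, hWopen, hrW, hWdisj⟩ := hrnc
    -- V := W ∩ I⁻(r) is nonempty open, disjoint from I⁻(p)
    set V : Set M := W ∩ {y : M | lt y r} with hVdef
    have hVopen : IsOpen V := hWopen.inter (hIopen r)
    have hVne : V.Nonempty := by
      obtain ⟨y, hyW, hyr⟩ := h_pd r W (hWopen.mem_nhds hrW)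
      exact ⟨y, hyW, hyr⟩
    have hVpos : 0 < μ V := hpos V hVopen hVne
    have hVdisj : ∀ y ∈ V, ¬ lt y p := by
      intro y hy hyp
      have : y ∈ W ∩ {y : M | lt y p} := ⟨hy.1, hyp⟩
      rw [hWdisj] at this
      exact this
    -- choose a compact C ⊆ I⁻(p) with μ(I⁻ p) < μ C + μ V
    have hCex : ∃ C : Set M, C ⊆ {y : M | lt y p} ∧ IsCompact C ∧
        μ {y : M | lt y p} < μ C + μ V := by
      by_cases hc : μ {y : M | lt y p} < μ V
      · exact ⟨∅, empty_subset _, isCompact_empty, by simpa using hc⟩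
      · push_neg at hc
        have htp0 : μ {y : M | lt y p} ≠ 0 := fun h0 => by
          rw [h0] at hc; exact absurd (le_antisymm hc zero_le) hVpos.ne'
        have htpT : μ {y : M | lt y p} ≠ ⊤ := measure_ne_top μ _
        have hlt : μ {y : M | lt y p} - μ V < μ {y : M | lt y p} :=
          ENNReal.sub_lt_self htpT htp0 hVpos.ne'
        obtain ⟨C, hCsub, hCcomp, hCμ⟩ := hreg (hIopen p) _ hlt
        refine ⟨C, hCsub, hCcomp, ?_⟩
        calc μ {y : M | lt y p} = μ {y : M | lt y p} - μ V + μ V :=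
              (tsub_add_cancel_of_le hc).symm
          _ < μ C + μ V := ENNReal.add_lt_add_right (measure_ne_top μ _) hCμ
    obtain ⟨C, hCsub, hCcomp, hClt⟩ := hCex
    -- upper semicontinuity gives an eventual bound
    have hev1 : ∀ᶠ n in atTop, μ {y : M | lt y (pn (φ n))} < μ C + μ V :=
      (hpnt.comp hφ.tendsto_atTop).eventually (husc _ hClt)
    -- eventually C ⊆ I⁻(pn (φ n))
    have hCev : ∀ᶠ x in nhds p, ∀ y ∈ C, lt y x := by
      refine hCcomp.eventually_forall_of_forall_eventually (fun y hy => ?_)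
      have : IsOpen {z : M × M | lt z.2 z.1} := h_open.preimage continuous_swap
      exact this.eventually_mem (hCsub hy)
    have hev2 : ∀ᶠ n in atTop, ∀ y ∈ C, lt y (pn (φ n)) :=
      (hpnt.comp hφ.tendsto_atTop).eventually hCev
    -- eventually r ≪ pn (φ n)
    have hev3 : ∀ᶠ n in atTop, lt r (pn (φ n)) := by
      have hq' : ∀ᶠ n in atTop, qn (φ n) ∈ {y : M | lt r y} :=
        hqlim.eventually ((hFopen r).eventually_mem hrq)
      refine hq'.mono fun n hn => ?_
      have := hqncl (φ n)
      rw [mem_closure_iff] at this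
      obtain ⟨s, hs1, hs2⟩ := this _ (hFopen r) hn
      exact htrans hs1 hs2
    obtain ⟨n, h1, h2, h3⟩ := (hev1.and (hev2.and hev3)).exists
    obtain ⟨h2, h3⟩ := (⟨h2, h3⟩ : _ ∧ _)
    -- derive the contradiction
    have hsub : C ∪ V ⊆ {y : M | lt y (pn (φ n))} := by
      rintro y (hy | hy)
      · exact h2 y hy
      · exact htrans hy.2 h3
    have hdisj : Disjoint C V := by
      rw [Set.disjoint_left]
      intro y hyC hyV
      exact hVdisj y hyV (hCsub hyC)
    have : μ C + μ V ≤ μ {y : M | lt y (pn (φ n))} := by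
      rw [← measure_union hdisj hVopen.measurableSet]
      exact measure_mono hsub
    exact absurd h1 (not_lt.2 this)
  · -- outer continuity → usc
    intro hout c hc
    by_cases hcu : μ Set.univ < c
    · exact Eventually.of_forall fun x =>
        lt_of_le_of_lt (measure_mono (subset_univ _)) hcu
    · push_neg at hcu
      have hcT : c ≠ ⊤ := ne_top_of_le_ne_top (measure_ne_top μ Set.univ) hcu
      set W : Set M := (closure {y : M | lt y p})ᶜ with hWdef
      have hWopen : IsOpen W := isOpen_compl_iff.2 isClosed_closure
      have hμsplit : μ Set.univ ≤ μ {y : M | lt y p} + μ W := by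
        calc μ Set.univ ≤ μ (closure {y : M | lt y p} ∪ W) :=
              measure_mono fun y _ => by
                by_cases h : y ∈ closure {y : M | lt y p}
                · exact Or.inl h
                · exact Or.inr h
          _ ≤ μ (closure {y : M | lt y p}) + μ W := measure_union_le _ _
          _ = μ {y : M | lt y p} + μ W := by rw [hclos p]
      have hrlt : μ Set.univ - c < μ W := by
        have h1 : μ Set.univ - c ≤ μ {y : M | lt y p} + μ W - c :=
          tsub_le_tsub_right hμsplit c
        have h2 : μ {y : M | lt y p} + μ W - c < μ W := by
          rw [ENNReal.sub_lt_iff_lt_right hcT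
            (hcu.trans hμsplit)]
          rw [add_comm (μ W) c]
          exact ENNReal.add_lt_add_right (measure_ne_top μ _) hc
        exact lt_of_le_of_lt h1 h2
      obtain ⟨K, hKW, hKcomp, hKμ⟩ := hreg hWopen _ hrlt
      obtain ⟨U, hUopen, hpU, hU⟩ := hout K hKcomp hKW
      filter_upwards [hUopen.mem_nhds hpU] with x hxU
      have hdisj : Disjoint K {y : M | lt y x} := by
        rw [Set.disjoint_left]
        intro y hyK hyI
        have : y ∈ K ∩ closure {y : M | lt y x} := ⟨hyK, subset_closure hyI⟩
        rw [hU x hxU] at this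
        exact this
      have hsum : μ K + μ {y : M | lt y x} ≤ μ Set.univ := by
        rw [← measure_union hdisj (hIopen x).measurableSet]
        exact measure_mono (subset_univ _)
      have huc : μ Set.univ < μ K + c := by
        calc μ Set.univ ≤ μ Set.univ - c + c := le_tsub_add
          _ < μ K + c := ENNReal.add_lt_add_right hcT hKμ
      have : μ K + μ {y : M | lt y x} < μ K + c :=
        lt_of_le_of_lt hsum huc
      exact (ENNReal.add_lt_add_iff_left (measure_ne_top μ _)).1 this
end

section
/- Let M be a topological space and ≪ a transitive binary relation on M such that I⁺(p) = {q | p ≪ q} and I⁻(p) = {q | q ≪ p} are open for every p ∈ M, and satisfying the interpolation property: whenever p ≪ q there exists r with p ≪ r ≪ q. Let μ be a finite Borel measure on M which is positive on every nonempty open set, and set t⁻(x) = μ(I⁻(x)). Then ≪ is chronological (there is no p with p ≪ p) if and only if t⁻ is strictly ≪-increasing, i.e. p ≪ q implies t⁻(p) < t⁻(q). -/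
open MeasureTheory

/-- A relation is chronological (no `p` with `p ≪ p`) iff the past volume
function `t⁻(x) = μ(I⁻(x))` is strictly `≪`-increasing. -/
theorem stmt_13 {M : Type*} [TopologicalSpace M]
    [MeasurableSpace M] [BorelSpace M]
    (lt : M → M → Prop)
    (htrans : ∀ {a b c : M}, lt a b → lt b c → lt a c)
    (hopen_fut : ∀ p : M, IsOpen {q : M | lt p q})
    (hopen_past : ∀ p : M, IsOpen {q : M | lt q p})
    (hinterp : ∀ {p q : M}, lt p q → ∃ r : M, lt p r ∧ lt r q)
    (μ : Measure M) [IsFiniteMeasure μ]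
    (hpos : ∀ U : Set M, IsOpen U → U.Nonempty → 0 < μ U) :
    (¬ ∃ p : M, lt p p) ↔
      (∀ p q : M, lt p q → μ {y : M | lt y p} < μ {y : M | lt y q}) := by
  constructor
  · intro hchron p q hpq
    obtain ⟨r, hpr, hrq⟩ := hinterp hpq
    set V : Set M := {y : M | lt r y} ∩ {y : M | lt y q} with hV
    have hVopen : IsOpen V := (hopen_fut r).inter (hopen_past q)
    have hVne : V.Nonempty := by
      obtain ⟨s, hrs, hsq⟩ := hinterp hrq
      exact ⟨s, hrs, hsq⟩
    have hVpos : 0 < μ V := hpos V hVopen hVne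
    have hsub : {y : M | lt y p} ⊆ {y : M | lt y q} := fun y hy => htrans hy hpq
    have hdisj : Disjoint {y : M | lt y p} V := by
      rw [Set.disjoint_left]
      rintro y hyp ⟨hry, _⟩
      exact hchron ⟨r, htrans (htrans hry hyp) hpr⟩
    have hunion : {y : M | lt y p} ∪ V ⊆ {y : M | lt y q} := by
      intro y hy
      rcases hy with hy | hy
      · exact hsub hy
      · exact hy.2
    have hmeas : μ ({y : M | lt y p} ∪ V) = μ {y : M | lt y p} + μ V :=
      measure_union hdisj (hVopen.measurableSet)
    calc μ {y : M | lt y p} < μ {y : M | lt y p} + μ V := by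
          exact ENNReal.lt_add_right (measure_ne_top μ _) hVpos.ne'
      _ = μ ({y : M | lt y p} ∪ V) := hmeas.symm
      _ ≤ μ {y : M | lt y q} := measure_mono hunion
  · rintro hmono ⟨p, hpp⟩
    exact lt_irrefl _ (hmono p p hpp)
end

section
/- Let M be a topological space and ≪, ≤ binary relations on M such that: p ≪ q implies p ≤ q; (PushUp) p ≤ q and q ≪ r imply p ≪ r, and p ≪ q and q ≤ r imply p ≪ r; and every neighborhood of every point x meets both I⁺(x) = {y | x ≪ y} and I⁻(x) = {y | y ≪ x}. If J⁺(p) = {q ∈ M | p ≤ q} is closed for every p ∈ M, then the relation is past reflecting: for all p, q ∈ M, if q ∈ cl(I⁺(p)) then p ∈ cl(I⁻(q)). -/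
/-- If every causal future `J⁺(p)` is closed, the relation is past reflecting:
`q ∈ cl(I⁺(p))` implies `p ∈ cl(I⁻(q))`. -/
theorem stmt_14 {M : Type*} [TopologicalSpace M]
    (lt le : M → M → Prop)
    (h_sub : ∀ {p q : M}, lt p q → le p q)
    (h_pushup₁ : ∀ {p q r : M}, le p q → lt q r → lt p r)
    (h_pushup₂ : ∀ {p q r : M}, lt p q → le q r → lt p r)
    (h_fd : ∀ x : M, ∀ U ∈ nhds x, ∃ y ∈ U, lt x y)
    (h_pd : ∀ x : M, ∀ U ∈ nhds x, ∃ y ∈ U, lt y x)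
    (h_closed : ∀ p : M, IsClosed {q : M | le p q}) :
    ∀ p q : M, q ∈ closure {y : M | lt p y} → p ∈ closure {y : M | lt y q} := by
  intro p q hq
  rw [mem_closure_iff_nhds]
  intro U hU
  obtain ⟨y, hyU, hyp⟩ := h_pd p (interior U) (interior_mem_nhds.mpr hU)
  -- y ≤ q : J⁺(y) is closed and contains I⁺(p)
  have hsub : {z : M | lt p z} ⊆ {z : M | le y z} := fun z hz =>
    h_sub (h_pushup₁ (h_sub hyp) hz)
  have hyq : le y q := by
    have := (h_closed y).closure_subset (closure_mono hsub hq)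
    exact this
  obtain ⟨w, hwU, hwy⟩ := h_pd y (interior U)
    ((isOpen_interior.mem_nhds_iff).mpr hyU)
  exact ⟨w, interior_subset hwU, h_pushup₂ hwy hyq⟩
end

section
/- Let M be a topological space and ≪, ≤ binary relations on M such that: p ≪ q implies p ≤ q; every neighborhood of every point x meets both I⁺(x) = {y | x ≪ y} and I⁻(x) = {y | y ≪ x}; ≤ is antisymmetric (p ≤ q and q ≤ p imply p = q; the abstract causality condition); and J⁺(p) = {q | p ≤ q} and J⁻(p) = {q | q ≤ p} are closed for every p ∈ M. Then the relation is distinguishing: I⁺(p) = I⁺(q) implies p = q, and I⁻(p) = I⁻(q) implies p = q. -/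
/-- An antisymmetric causal relation with closed causal futures and pasts is
distinguishing: equality of chronological futures (or pasts) forces equality of
the points. -/
theorem stmt_15 {M : Type*} [TopologicalSpace M]
    (lt le : M → M → Prop)
    (h_sub : ∀ {p q : M}, lt p q → le p q)
    (h_fd : ∀ x : M, ∀ U ∈ nhds x, ∃ y ∈ U, lt x y)
    (h_pd : ∀ x : M, ∀ U ∈ nhds x, ∃ y ∈ U, lt y x)
    (h_antisymm : ∀ {p q : M}, le p q → le q p → p = q)
    (h_closed_fut : ∀ p : M, IsClosed {q : M | le p q})
    (h_closed_past : ∀ p : M, IsClosed {q : M | le q p}) :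
    (∀ p q : M, {y : M | lt p y} = {y : M | lt q y} → p = q) ∧
    (∀ p q : M, {y : M | lt y p} = {y : M | lt y q} → p = q) := by
  have key_fut : ∀ p q : M, {y : M | lt p y} = {y : M | lt q y} → le q p := by
    intro p q h
    have hp : p ∈ closure {y : M | le q y} := by
      rw [mem_closure_iff_nhds]
      intro U hU
      obtain ⟨y, hyU, hy⟩ := h_fd p U hU
      exact ⟨y, hyU, h_sub (h ▸ hy : y ∈ {y : M | lt q y})⟩
    rwa [(h_closed_fut q).closure_eq] at hp
  have key_past : ∀ p q : M, {y : M | lt y p} = {y : M | lt y q} → le p q := by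
    intro p q h
    have hp : p ∈ closure {y : M | le y q} := by
      rw [mem_closure_iff_nhds]
      intro U hU
      obtain ⟨y, hyU, hy⟩ := h_pd p U hU
      exact ⟨y, hyU, h_sub (h ▸ hy : y ∈ {y : M | lt y q})⟩
    rwa [(h_closed_past q).closure_eq] at hp
  constructor
  · intro p q h
    exact h_antisymm (key_fut q p h.symm) (key_fut p q h)
  · intro p q h
    exact h_antisymm (key_past p q h) (key_past q p h.symm)
end

section
/- Let M be a topological space and ≪, ≤ binary relations on M such that: p ≪ q implies p ≤ q; (PushUp) p ≤ q and q ≪ r imply p ≪ r, and p ≪ q and q ≤ r imply p ≪ r; every neighborhood of every point x meets I⁺(x) = {y | x ≪ y} (FutDense); and J⁺(p) = {q | p ≤ q} is closed for every p ∈ M (abstract causal simplicity). Then the causal relation is recovered from the chronological one: for all x, y ∈ M, x ≤ y if and only if I⁺(y) ⊆ I⁺(x) and I⁻(x) ⊆ I⁻(y). -/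
/-- In an abstractly causally simple setting, the causal relation is recovered
from the chronological one: `x ≤ y` iff `I⁺(y) ⊆ I⁺(x)` and `I⁻(x) ⊆ I⁻(y)`. -/
theorem stmt_17 {M : Type*} [TopologicalSpace M]
    (lt le : M → M → Prop)
    (h_sub : ∀ {p q : M}, lt p q → le p q)
    (h_pushup₁ : ∀ {p q r : M}, le p q → lt q r → lt p r)
    (h_pushup₂ : ∀ {p q r : M}, lt p q → le q r → lt p r)
    (h_fd : ∀ x : M, ∀ U ∈ nhds x, ∃ y ∈ U, lt x y)
    (h_closed : ∀ p : M, IsClosed {q : M | le p q}) :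
    ∀ x y : M, le x y ↔
      ({z : M | lt y z} ⊆ {z : M | lt x z} ∧ {z : M | lt z x} ⊆ {z : M | lt z y}) := by
  intro x y
  constructor
  · intro h
    exact ⟨fun z hz => h_pushup₁ h hz, fun z hz => h_pushup₂ hz h⟩
  · rintro ⟨h1, _⟩
    have : y ∈ closure {q : M | le x q} := by
      rw [mem_closure_iff_nhds]
      intro U hU
      obtain ⟨z, hzU, hyz⟩ := h_fd y U hU
      exact ⟨z, hzU, h_sub (h1 hyz)⟩
    rwa [(h_closed x).closure_eq] at this
end

section
/- Let M be a topological space and ≪, ≤ binary relations on M such that: p ≪ q implies p ≤ q; {(p,q) ∈ M × M | p ≪ q} is open in the product topology; (PushUp) p ≤ q and q ≪ r imply p ≪ r, and p ≪ q and q ≤ r imply p ≪ r; and every neighborhood of every point x meets both I⁺(x) = {y | x ≪ y} and I⁻(x) = {y | y ≪ x}. If J⁺(p) = {q | p ≤ q} and J⁻(p) = {q | q ≤ p} are closed for every p ∈ M, then the set {(p,q) ∈ M × M | p ≤ q} is closed in M × M. -/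
/-- Pointwise closedness of all `J⁺(p)` and `J⁻(p)` implies that the causal
relation `J` is closed as a subset of `M × M`. -/
theorem stmt_18 {M : Type*} [TopologicalSpace M]
    (lt le : M → M → Prop)
    (h_sub : ∀ {p q : M}, lt p q → le p q)
    (h_open : IsOpen {pq : M × M | lt pq.1 pq.2})
    (h_pushup₁ : ∀ {p q r : M}, le p q → lt q r → lt p r)
    (h_pushup₂ : ∀ {p q r : M}, lt p q → le q r → lt p r)
    (h_fd : ∀ x : M, ∀ U ∈ nhds x, ∃ y ∈ U, lt x y)
    (h_pd : ∀ x : M, ∀ U ∈ nhds x, ∃ y ∈ U, lt y x)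
    (h_closed_fut : ∀ p : M, IsClosed {q : M | le p q})
    (h_closed_past : ∀ p : M, IsClosed {q : M | le q p}) :
    IsClosed {pq : M × M | le pq.1 pq.2} := by
  rw [← closure_subset_iff_isClosed]
  rintro ⟨p, q⟩ hpq
  -- Key claim: p ≤ r for every r with q ≪ r
  have key : ∀ r, lt q r → le p r := by
    intro r hqr
    have hp : p ∈ closure {a | le a r} := by
      rw [mem_closure_iff_nhds]
      intro U hU
      have hV : {b : M | lt b r} ∈ nhds q := by
        have hcont : Continuous fun b : M => (b, r) := by continuity
        exact (h_open.preimage hcont).mem_nhds hqr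
      have hUV : (U ×ˢ {b : M | lt b r}) ∈ nhds (p, q) :=
        prod_mem_nhds hU hV
      rw [mem_closure_iff_nhds] at hpq
      obtain ⟨⟨a, b⟩, ⟨haU, hbV⟩, hab⟩ := hpq _ hUV
      exact ⟨a, haU, h_sub (h_pushup₁ hab hbV)⟩
    rwa [(h_closed_past r).closure_eq] at hp
  -- q ∈ closure of I⁺(q) ⊆ J⁺(p), which is closed
  have hq : q ∈ closure {x | le p x} := by
    rw [mem_closure_iff_nhds]
    intro U hU
    obtain ⟨y, hyU, hy⟩ := h_fd q U hU
    exact ⟨y, hyU, key y hy⟩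
  rwa [(h_closed_fut p).closure_eq] at hq
end

section
/- Let M be a topological space and ≪, ≤ binary relations on M such that: p ≪ q implies p ≤ q; {(p,q) ∈ M × M | p ≪ q} is open in the product topology; (PushUp) p ≤ q and q ≪ r imply p ≪ r, and p ≪ q and q ≤ r imply p ≪ r; every neighborhood of every point x meets both I⁺(x) = {y | x ≪ y} and I⁻(x) = {y | y ≪ x}; and J⁺(p) = {q | p ≤ q} and J⁻(p) = {q | q ≤ p} are closed for every p ∈ M. Then for every compact set K ⊆ M, the sets J⁺(K) = {q ∈ M | ∃ p ∈ K, p ≤ q} and J⁻(K) = {q ∈ M | ∃ p ∈ K, q ≤ p} are closed. -/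
lemma stmt_19_aux {M : Type*} [TopologicalSpace M]
    (lt le : M → M → Prop)
    (h_sub : ∀ {p q : M}, lt p q → le p q)
    (h_open : IsOpen {pq : M × M | lt pq.1 pq.2})
    (h_pushup₁ : ∀ {p q r : M}, le p q → lt q r → lt p r)
    (h_fd : ∀ x : M, ∀ U ∈ nhds x, ∃ y ∈ U, lt x y)
    (h_closed_fut : ∀ p : M, IsClosed {q : M | le p q})
    (h_closed_past : ∀ p : M, IsClosed {q : M | le q p})
    (K : Set M) (hK : IsCompact K) :
    IsClosed {q : M | ∃ p ∈ K, le p q} := by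
  rw [← isOpen_compl_iff, isOpen_iff_mem_nhds]
  intro q hq
  by_contra hnq
  -- q is in the closure of S := J⁺(K)
  set S := {q : M | ∃ p ∈ K, le p q} with hS
  have hqcl : q ∈ closure S := by
    rw [mem_closure_iff_nhds]
    intro U hU
    by_contra h
    exact hnq (Filter.mem_of_superset hU (fun x hx hxS => h ⟨x, hx, hxS⟩))
  -- index type: chronological future of q
  have hopen_slice : ∀ r : M, IsOpen {x : M | lt x r} := by
    intro r
    have : Continuous (fun x : M => (x, r)) := by continuity
    exact h_open.preimage this
  set ι := {r : M // lt q r} with hι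
  set Z : ι → Set M := fun r => {p : M | le p r.1} with hZ
  have hZc : ∀ i : ι, IsClosed (Z i) := fun i => h_closed_past i.1
  -- finite intersection property
  have hFIP : ∀ t : Finset ι, (K ∩ ⋂ i ∈ t, Z i).Nonempty := by
    intro t
    have hUopen : IsOpen (⋂ i ∈ t, {x : M | lt x i.1}) :=
      isOpen_biInter_finset (fun i _ => hopen_slice i.1)
    have hqU : q ∈ ⋂ i ∈ t, {x : M | lt x i.1} := by
      simp only [Set.mem_iInter]
      exact fun i _ => i.2
    rcases (mem_closure_iff_nhds.mp hqcl) _ (hUopen.mem_nhds hqU) with ⟨x, hxU, hxS⟩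
    rcases hxS with ⟨p, hpK, hple⟩
    refine ⟨p, hpK, ?_⟩
    simp only [Set.mem_iInter] at hxU ⊢
    intro i hi
    exact h_sub (h_pushup₁ hple (hxU i hi))
  -- compactness gives a common point p
  have hne : (K ∩ ⋂ i, Z i).Nonempty := by
    by_contra h
    rw [Set.not_nonempty_iff_eq_empty] at h
    rcases hK.elim_finite_subfamily_closed Z hZc h with ⟨t, ht⟩
    exact absurd ht (by
      rcases hFIP t with ⟨p, hp⟩
      intro ht
      rw [ht] at hp
      exact Set.notMem_empty p hp)
  rcases hne with ⟨p, hpK, hpZ⟩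
  simp only [Set.mem_iInter] at hpZ
  -- conclude le p q via closedness of J⁺(p)
  have hpq : q ∈ closure {r : M | le p r} := by
    rw [mem_closure_iff_nhds]
    intro U hU
    rcases h_fd q U hU with ⟨y, hyU, hqy⟩
    exact ⟨y, hyU, hpZ ⟨y, hqy⟩⟩
  rw [(h_closed_fut p).closure_eq] at hpq
  exact hq ⟨p, hpK, hpq⟩

/-- Pointwise closedness of all `J⁺(p)` and `J⁻(p)` implies closedness of
`J⁺(K)` and `J⁻(K)` for every compact `K`. -/
theorem stmt_19 {M : Type*} [TopologicalSpace M]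
    (lt le : M → M → Prop)
    (h_sub : ∀ {p q : M}, lt p q → le p q)
    (h_open : IsOpen {pq : M × M | lt pq.1 pq.2})
    (h_pushup₁ : ∀ {p q r : M}, le p q → lt q r → lt p r)
    (h_pushup₂ : ∀ {p q r : M}, lt p q → le q r → lt p r)
    (h_fd : ∀ x : M, ∀ U ∈ nhds x, ∃ y ∈ U, lt x y)
    (h_pd : ∀ x : M, ∀ U ∈ nhds x, ∃ y ∈ U, lt y x)
    (h_closed_fut : ∀ p : M, IsClosed {q : M | le p q})
    (h_closed_past : ∀ p : M, IsClosed {q : M | le q p}) :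
    ∀ K : Set M, IsCompact K →
      IsClosed {q : M | ∃ p ∈ K, le p q} ∧ IsClosed {q : M | ∃ p ∈ K, le q p} := by
  intro K hK
  constructor
  · exact stmt_19_aux lt le h_sub h_open h_pushup₁ h_fd h_closed_fut h_closed_past K hK
  · have hopen' : IsOpen {pq : M × M | lt pq.2 pq.1} := by
      have : Continuous (Prod.swap : M × M → M × M) := continuous_swap
      exact h_open.preimage this
    exact stmt_19_aux (fun a b => lt b a) (fun a b => le b a)
      h_sub hopen' (fun h1 h2 => h_pushup₂ h2 h1) h_pd h_closed_past h_closed_fut K hK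
end
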